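/- arXiv:2106.12293 — 3 statements merged into one kernel-verified Lean document; each statement's English description precedes it below -/
import Mathlib

section
/- Let p ≥ 1 and suppose G is p-edge-outconnected from s, i.e., for every t ≠ s there exist p pairwise edge-disjoint paths from s to t in G. Then there exist nested edge sets H_1 ⊆ H_2 ⊆ … ⊆ H_p ⊆ E such that for every i ∈ {1,…,p}: no edge of H_i enters s; every vertex t ≠ s has exactly i edges of H_i entering it (so |H_i| = i(n−1)); and for every t ≠ s there exists a family of i pairwise edge-disjoint paths from s to t, all of whose edges belong to H_i, whose total cost is minimum among all families of i pairwise edge-disjoint paths from s to t in G. -/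
open scoped Classical

namespace MultipathPreserver

variable {V : Type*}

/-- `IsPath F u v L`: `L` is a list of pairwise-distinct directed edges
`e_1, …, e_k` with `e_j = (x_{j-1}, x_j)`, `x_0 = u`, `x_k = v`, all edges
belonging to the edge set `F`. The empty list is a path from `u` to `u`. -/
def IsPath (F : Set (V × V)) (u v : V) (L : List (V × V)) : Prop :=
  L.Nodup ∧ (∀ e ∈ L, e ∈ F) ∧ List.Chain' (fun e f => e.2 = f.1) L ∧
  (∀ e ∈ L.head?, e.1 = u) ∧ (∀ e ∈ L.getLast?, e.2 = v) ∧ (L = [] → u = v)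

/-- The cost of a path (sum of edge costs w.r.t. the cost function `w`). -/
def pathCost (w : V × V → ℝ) (L : List (V × V)) : ℝ := (L.map w).sum

/-- A family of `k` pairwise edge-disjoint paths from `u` to `v` in the graph
with edge set `F`. -/
def IsDisjointFamily (F : Set (V × V)) (u v : V) {k : ℕ}
    (P : Fin k → List (V × V)) : Prop :=
  (∀ j, IsPath F u v (P j)) ∧ ∀ j j' : Fin k, j ≠ j' → ∀ e ∈ P j, e ∉ P j'

/-- The total cost of a family of paths. -/
def famCost (w : V × V → ℝ) {k : ℕ} (P : Fin k → List (V × V)) : ℝ :=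
  ∑ j, pathCost w (P j)

/-- A family of `k` pairwise edge-disjoint paths from `u` to `v` whose total
cost is minimum among all such families. -/
def IsMinFamily (F : Set (V × V)) (w : V × V → ℝ) (u v : V) {k : ℕ}
    (P : Fin k → List (V × V)) : Prop :=
  IsDisjointFamily F u v P ∧
  ∀ Q : Fin k → List (V × V), IsDisjointFamily F u v Q → famCost w P ≤ famCost w Q

/-- `S` induces `k` edge-disjoint paths of minimum total cost from `u` to `v`
in the graph with edge set `F` and costs `w`: `S` is exactly the set of edges
used by some minimum-total-cost family of `k` pairwise edge-disjoint paths. -/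
def Induces (F : Set (V × V)) (w : V × V → ℝ) (u v : V) (k : ℕ)
    (S : Set (V × V)) : Prop :=
  ∃ P : Fin k → List (V × V), IsMinFamily F w u v P ∧ S = {e | ∃ j, e ∈ P j}

/-- As `Induces`, but additionally the paths of the family are simple
(their vertices `u, (P j)_1.2, …` are pairwise distinct). -/
def InducesSimple (F : Set (V × V)) (w : V × V → ℝ) (u v : V) (k : ℕ)
    (S : Set (V × V)) : Prop :=
  ∃ P : Fin k → List (V × V), IsMinFamily F w u v P ∧
    (∀ j, (u :: (P j).map Prod.snd).Nodup) ∧ S = {e | ∃ j, e ∈ P j}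

/-- Edge set of the residual network `G_S`: edges of `E \ S` together with the
reversals of the edges of `S`. -/
def resEdges (E S : Set (V × V)) : Set (V × V) :=
  (E \ S) ∪ {e | (e.2, e.1) ∈ S}

/-- Cost function of the residual network `G_S`: a reversed edge `(v,u)` with
`(u,v) ∈ S` costs `-c (u,v)`; any other edge keeps its cost. -/
noncomputable def resCost (c : V × V → ℝ) (S : Set (V × V)) (e : V × V) : ℝ :=
  if (e.2, e.1) ∈ S then -c (e.2, e.1) else c e

/-- `η(L)`: the number of edges of `L` belonging to `E \ H`. -/
noncomputable def eta (E H : Set (V × V)) (L : List (V × V)) : ℕ :=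
  L.countP (fun e => decide (e ∈ E ∧ e ∉ H))

/-- The measure `|π| = (c_S(π), η(π))` of a path, compared lexicographically. -/
noncomputable def pmeasure (w : V × V → ℝ) (E H : Set (V × V))
    (L : List (V × V)) : ℝ × ℕ :=
  (pathCost w L, eta E H L)

/-- Strict lexicographic order on measures. -/
def lexLt (a b : ℝ × ℕ) : Prop := a.1 < b.1 ∨ (a.1 = b.1 ∧ a.2 < b.2)

/-- Lexicographic order on measures. -/
def lexLe (a b : ℝ × ℕ) : Prop := a.1 < b.1 ∨ (a.1 = b.1 ∧ a.2 ≤ b.2)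

/-- `Π(u,v; G_S)`: the paths from `u` to `v` in the residual network `G_S`
that are minimal w.r.t. the lexicographic order `≼` on `|·| = (c_S(·), η(·))`. -/
def PiMin (E H : Set (V × V)) (c : V × V → ℝ) (S : Set (V × V)) (u v : V) :
    Set (List (V × V)) :=
  {L | IsPath (resEdges E S) u v L ∧
    ∀ L', IsPath (resEdges E S) u v L' →
      lexLe (pmeasure (resCost c S) E H L) (pmeasure (resCost c S) E H L')}

/-- The number of edges of the prefix `π[s : q(π)]` of a path `π`:
one more than the index of the last edge of `π`, other than the final edge,
belonging to `E \ H`; `0` if no such edge exists. -/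
noncomputable def qPrefixLen (E H : Set (V × V)) (L : List (V × V)) : ℕ :=
  L.dropLast.length -
    List.findIdx (fun e => decide (e ∈ E ∧ e ∉ H)) L.dropLast.reverse

/-- `q(π)`: the last internal vertex of `π` whose incoming edge along `π`
belongs to `E \ H`, and `s` if no such vertex exists.  The prefix `π[s:q(π)]`
is `L.take (qPrefixLen E H L)` and the suffix `π[q(π):t]` is
`L.drop (qPrefixLen E H L)`. -/
noncomputable def qVert (E H : Set (V × V)) (s : V) (L : List (V × V)) : V :=
  ((L.take (qPrefixLen E H L)).getLast?).elim s Prod.snd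

/-- `λ(t)`: the maximum number of pairwise edge-disjoint paths from `s` to `t`
in the graph with edge set `E`. -/
noncomputable def lambda (E : Set (V × V)) (s t : V) : ℕ :=
  sSup {k : ℕ | ∃ P : Fin k → List (V × V), IsDisjointFamily E s t P}


-- ===== auxiliary development =====

noncomputable def inD (S : Finset (V × V)) (v : V) : ℕ :=
  (S.filter (fun e => e.2 = v)).card
noncomputable def outD (S : Finset (V × V)) (v : V) : ℕ :=
  (S.filter (fun e => e.1 = v)).card
noncomputable def dive (S : Finset (V × V)) (v : V) : ℤ :=
  (outD S v : ℤ) - inD S v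

lemma inD_union {S T : Finset (V × V)} (h : Disjoint S T) (v : V) :
    inD (S ∪ T) v = inD S v + inD T v := by
  unfold inD
  rw [Finset.filter_union, Finset.card_union_of_disjoint
    (Finset.disjoint_filter_filter h)]

lemma outD_union {S T : Finset (V × V)} (h : Disjoint S T) (v : V) :
    outD (S ∪ T) v = outD S v + outD T v := by
  unfold outD
  rw [Finset.filter_union, Finset.card_union_of_disjoint
    (Finset.disjoint_filter_filter h)]

lemma dive_union {S T : Finset (V × V)} (h : Disjoint S T) (v : V) :
    dive (S ∪ T) v = dive S v + dive T v := by
  unfold dive; rw [inD_union h, outD_union h]; push_cast; ring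

lemma dive_sdiff {S T : Finset (V × V)} (h : T ⊆ S) (v : V) :
    dive (S \ T) v = dive S v - dive T v := by
  have h1 : (S \ T) ∪ T = S := Finset.sdiff_union_of_subset h
  have h2 := dive_union (Finset.sdiff_disjoint : Disjoint (S \ T) T) v
  rw [h1] at h2
  omega

lemma inD_image_swap (S : Finset (V × V)) (v : V) :
    inD (S.image Prod.swap) v = outD S v := by
  unfold inD outD
  have : (S.image Prod.swap).filter (fun e => e.2 = v)
      = (S.filter (fun e => e.1 = v)).image Prod.swap := by
    ext e
    simp only [Finset.mem_filter, Finset.mem_image]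
    constructor
    · rintro ⟨⟨f, hf, rfl⟩, h2⟩; exact ⟨f, ⟨hf, h2⟩, rfl⟩
    · rintro ⟨f, ⟨hf, h1⟩, rfl⟩; exact ⟨⟨f, hf, rfl⟩, h1⟩
  rw [this, Finset.card_image_of_injective _ Prod.swap_injective]

lemma outD_image_swap (S : Finset (V × V)) (v : V) :
    outD (S.image Prod.swap) v = inD S v := by
  unfold inD outD
  have : (S.image Prod.swap).filter (fun e => e.1 = v)
      = (S.filter (fun e => e.2 = v)).image Prod.swap := by
    ext e
    simp only [Finset.mem_filter, Finset.mem_image]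
    constructor
    · rintro ⟨⟨f, hf, rfl⟩, h2⟩; exact ⟨f, ⟨hf, h2⟩, rfl⟩
    · rintro ⟨f, ⟨hf, h1⟩, rfl⟩; exact ⟨⟨f, hf, rfl⟩, h1⟩
  rw [this, Finset.card_image_of_injective _ Prod.swap_injective]

lemma dive_image_swap (S : Finset (V × V)) (v : V) :
    dive (S.image Prod.swap) v = - dive S v := by
  unfold dive; rw [inD_image_swap, outD_image_swap]; ring

lemma inD_singleton (e : V × V) (v : V) :
    inD {e} v = if v = e.2 then 1 else 0 := by
  rw [eq_comm (a := v)]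
  unfold inD; rw [Finset.filter_singleton]; split <;> simp

lemma outD_singleton (e : V × V) (v : V) :
    outD {e} v = if v = e.1 then 1 else 0 := by
  rw [eq_comm (a := v)]
  unfold outD; rw [Finset.filter_singleton]; split <;> simp

lemma dive_singleton (e : V × V) (v : V) :
    dive {e} v = (if v = e.1 then 1 else 0) - (if v = e.2 then 1 else 0) := by
  unfold dive; rw [inD_singleton, outD_singleton]; split <;> split <;> simp

lemma inD_mono {S T : Finset (V × V)} (h : S ⊆ T) (v : V) : inD S v ≤ inD T v :=
  Finset.card_le_card (Finset.filter_subset_filter _ h)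

-- path tail lemma
lemma isPath_cons {F : Set (V × V)} {u v : V} {e : V × V} {M : List (V × V)}
    (h : IsPath F u v (e :: M)) :
    IsPath F e.2 v M ∧ e ∈ F ∧ e.1 = u ∧ e ∉ M := by
  obtain ⟨hn, hm, hc, hh, hl, he⟩ := h
  have hem : e ∉ M := (List.nodup_cons.1 hn).1
  have hMn : M.Nodup := (List.nodup_cons.1 hn).2
  have hc' := List.isChain_cons.1 hc
  refine ⟨⟨hMn, fun f hf => hm f (List.mem_cons_of_mem _ hf), hc'.2,
    fun f hf => (hc'.1 f hf).symm, ?_, ?_⟩, hm e List.mem_cons_self,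
    hh e rfl, hem⟩
  · intro f hf
    apply hl
    cases M with
    | nil => simp at hf
    | cons g M' => rw [List.getLast?_cons_cons]; exact hf
  · intro hM
    subst hM
    exact hl e rfl

lemma isPath_cons' {F : Set (V × V)} {v : V} {e : V × V} {M : List (V × V)}
    (h : IsPath F e.2 v M) (heF : e ∈ F) (hem : e ∉ M) :
    IsPath F e.1 v (e :: M) := by
  obtain ⟨hn, hm, hc, hh, hl, he⟩ := h
  refine ⟨List.nodup_cons.2 ⟨hem, hn⟩, ?_, ?_, ?_, ?_, ?_⟩
  · intro f hf
    rcases List.mem_cons.1 hf with rfl | hf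
    · exact heF
    · exact hm f hf
  · exact List.isChain_cons.2 ⟨fun f hf => (hh f hf).symm, hc⟩
  · intro f hf; simp at hf; subst hf; rfl
  · intro f hf
    cases M with
    | nil => simp at hf; subst hf; simp [he rfl]
    | cons g M' => rw [List.getLast?_cons_cons] at hf; exact hl f hf
  · simp

lemma isPath_mono {F F' : Set (V × V)} {u v : V} {L : List (V × V)}
    (hF : F ⊆ F') (h : IsPath F u v L) : IsPath F' u v L :=
  ⟨h.1, fun e he => hF (h.2.1 e he), h.2.2.1, h.2.2.2.1, h.2.2.2.2.1, h.2.2.2.2.2⟩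

lemma dive_toFinset {F : Set (V × V)} {u v : V} {L : List (V × V)}
    (h : IsPath F u v L) (w : V) :
    dive L.toFinset w = (if w = u then 1 else 0) - (if w = v then 1 else 0) := by
  induction L generalizing u with
  | nil =>
    have : u = v := h.2.2.2.2.2 rfl
    subst this
    simp [dive, inD, outD]
  | cons e M ih =>
    obtain ⟨hM, heF, heu, hem⟩ := isPath_cons h
    have : (e :: M).toFinset = {e} ∪ M.toFinset := by
      rw [List.toFinset_cons, Finset.insert_eq]
    rw [this, dive_union (by simpa using hem), dive_singleton, ih hM]
    subst heu
    split_ifs <;> omega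


/-- Trail extraction. -/
lemma exists_trail (S : Finset (V × V)) (hirr : ∀ e ∈ S, e.1 ≠ e.2)
    (u t : V) (hut : u ≠ t) (hdu : 1 ≤ dive S u)
    (hdw : ∀ w, w ≠ u → w ≠ t → 0 ≤ dive S w) :
    ∃ L, IsPath (↑S) u t L ∧ L ≠ [] := by
  induction S using Finset.strongInduction generalizing u with
  | _ S ih =>
  have hout : 1 ≤ outD S u := by
    have h0 : dive S u = (outD S u : ℤ) - inD S u := rfl
    omega
  have : (S.filter (fun e => e.1 = u)).Nonempty := by
    rw [← Finset.card_pos]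
    have h0 : outD S u = (S.filter (fun e => e.1 = u)).card := rfl
    omega
  obtain ⟨e, he⟩ := this
  obtain ⟨heS, heu⟩ := Finset.mem_filter.1 he
  by_cases hat : e.2 = t
  · refine ⟨[e], ⟨List.nodup_singleton e, ?_, List.isChain_singleton e, ?_, ?_, by simp⟩, by simp⟩
    · intro f hf; simp at hf; subst hf; exact heS
    · intro f hf; simp at hf; subst hf; exact heu
    · intro f hf; simp at hf; subst hf; exact hat
  · have hau : e.2 ≠ u := fun h => hirr e heS (heu.trans h.symm)
    set S' := S.erase e with hS'
    have hsub : S' ⊂ S := Finset.erase_ssubset heS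
    have hdive : ∀ w, dive S' w = dive S w - dive {e} w := by
      intro w
      have : S' = S \ {e} := by
        rw [hS', Finset.erase_eq]
      rw [this, dive_sdiff (by simpa using heS)]
    have hde : ∀ w, dive {e} w = (if w = e.1 then 1 else 0) - (if w = e.2 then 1 else 0) := by
      intro w
      have : IsPath (↑({e} : Finset (V × V)) : Set (V × V)) e.1 e.2 [e] := by
        refine ⟨List.nodup_singleton e, by simp, List.isChain_singleton e, by simp, by simp, by simp⟩
      have := dive_toFinset this w
      simpa using this
    obtain ⟨L', hL', hne⟩ := ih S' hsub (fun f hf => hirr f (Finset.mem_of_mem_erase hf)) e.2 hat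
      (by
        have h0 := hdw e.2 hau hat
        have h1 : e.2 ≠ e.1 := fun h => hau (h.trans heu)
        rw [hdive, hde, if_neg h1, if_pos rfl]
        omega)
      (by
        intro w hw1 hw2
        rw [hdive, hde]
        by_cases hwu : w = u
        · subst hwu
          rw [if_pos heu.symm, if_neg (Ne.symm hau)]
          omega
        · have h2 := hdw w hwu hw2
          have h3 : w ≠ e.1 := fun h => hwu (h.trans heu)
          rw [if_neg h3]
          split_ifs <;> omega)
    have heL' : e ∉ L' := by
      intro hmem
      have := hL'.2.1 e hmem
      simp [hS'] at this
    refine ⟨e :: L', ?_, by simp⟩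
    have := isPath_cons' (isPath_mono (Finset.coe_subset.2 (Finset.erase_subset _ _) : (↑S' : Set (V×V)) ⊆ ↑S) hL') heS heL'
    rwa [heu] at this


/-- Suffix surgery: drop everything up to the last entry into `u`. -/
lemma avoid_head_start_aux {F : Set (V × V)} {u t : V} (hut : u ≠ t) :
    ∀ (n : ℕ) (L : List (V × V)), L.length ≤ n → IsPath F u t L →
    ∃ L', L'.Sublist L ∧ IsPath F u t L' ∧ ∀ e ∈ L', e.2 ≠ u := by
  intro n
  induction n with
  | zero =>
    intro L hlen hL
    have : L = [] := List.length_eq_zero_iff.1 (Nat.le_zero.1 hlen)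
    subst this
    exact ⟨[], List.Sublist.refl _, hL, by simp⟩
  | succ n ih =>
  intro L hlen hL
  by_cases hv : ∀ e ∈ L, e.2 ≠ u
  · exact ⟨L, List.Sublist.refl L, hL, hv⟩
  · push_neg at hv
    obtain ⟨e, heL, heu⟩ := hv
    obtain ⟨L₁, L₂, rfl⟩ := List.append_of_mem heL
    have hL₂ : IsPath F u t L₂ := by
      obtain ⟨hn, hm, hc, hh, hl, hemp⟩ := hL
      have hc2 := (List.isChain_append (l₁ := L₁ ++ [e]) (l₂ := L₂)).1
        (by rw [List.append_assoc, List.singleton_append]; exact hc)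
      have hne : L₂ ≠ [] := by
        intro h
        subst h
        have : e.2 = t := by
          apply hl
          simp
        exact hut (heu.symm.trans this)
      refine ⟨hn.sublist (by simp), fun f hf => hm f (by simp [hf]),
        hc2.2.1, ?_, ?_, fun h => absurd h hne⟩
      · intro f hf
        have := hc2.2.2 e (by simp) f hf
        rw [← this, heu]
      · intro f hf
        apply hl
        rcases List.eq_nil_or_concat L₂ with h | ⟨M₂, g, rfl⟩
        · exact absurd h hne
        · simp [List.getLast?_append, List.getLast?_concat] at hf ⊢
          rw [show e :: (M₂ ++ [g]) = (e :: M₂) ++ [g] by simp, List.getLast?_concat]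
          rw [hf]
    have hlen2 : L₂.length ≤ n := by
      have := hlen
      simp at this
      omega
    obtain ⟨L', hsub, hP, hav⟩ := ih L₂ hlen2 hL₂
    exact ⟨L', hsub.trans (by simp), hP, hav⟩

lemma avoid_head_start {F : Set (V × V)} {u t : V} (hut : u ≠ t)
    {L : List (V × V)} (hL : IsPath F u t L) :
    ∃ L', L'.Sublist L ∧ IsPath F u t L' ∧ ∀ e ∈ L', e.2 ≠ u :=
  avoid_head_start_aux hut L.length L le_rfl hL

/-- Prefix surgery: cut a path at the first arrival at `v`. -/
lemma cut_first_arrival {F : Set (V × V)} {u v : V} :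
    ∀ L : List (V × V), IsPath F u v L → u ≠ v →
    ∃ L', L'.Sublist L ∧ IsPath F u v L' ∧
      (∀ e ∈ L', e.1 ≠ v) ∧ (∀ e ∈ L'.dropLast, e.2 ≠ v) := by
  intro L
  induction L generalizing u with
  | nil => intro hL huv; exact absurd (hL.2.2.2.2.2 rfl) huv
  | cons e M ih =>
    intro hL huv
    obtain ⟨hM, heF, heu, hem⟩ := isPath_cons hL
    by_cases he2 : e.2 = v
    · refine ⟨[e], by simp, ?_, ?_, by simp⟩
      · refine ⟨List.nodup_singleton e, ?_, List.isChain_singleton e, ?_, ?_, by simp⟩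
        · intro f hf; simp at hf; subst hf; exact heF
        · intro f hf; simp at hf; subst hf; exact heu
        · intro f hf; simp at hf; subst hf; exact he2
      · intro f hf; simp at hf; subst hf; rw [heu]; exact huv
    · obtain ⟨M', hsub, hP, htl, hhd⟩ := ih hM he2
      have hne : M' ≠ [] := by
        intro h
        exact he2 (hP.2.2.2.2.2 h)
      have heM' : e ∉ M' := fun h => hem (hsub.mem h)
      have hP2 : IsPath F u v (e :: M') := by
        have := isPath_cons' hP heF heM'
        rwa [heu] at this
      refine ⟨e :: M', hsub.cons_cons e, hP2, ?_, ?_⟩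
      · intro f hf
        rcases List.mem_cons.1 hf with rfl | hf
        · rw [heu]; exact huv
        · exact htl f hf
      · obtain ⟨g, M'', rfl⟩ := List.exists_cons_of_ne_nil hne
        rw [List.dropLast_cons₂]
        intro f hf
        rcases List.mem_cons.1 hf with rfl | hf
        · exact he2
        · exact hhd f hf



lemma dive_empty (w : V) : dive (∅ : Finset (V × V)) w = 0 := by
  have h : IsPath (∅ : Set (V × V)) w w [] :=
    ⟨by simp, by simp, by constructor, by simp, by simp, fun _ => rfl⟩
  simpa using dive_toFinset h w

lemma toFinset_subset_of_isPath {S : Finset (V × V)} {u v : V} {L : List (V × V)}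
    (h : IsPath (↑S) u v L) : L.toFinset ⊆ S := by
  intro e he
  exact h.2.1 e (List.mem_toFinset.1 he)

/-- Decomposition of a balanced edge set into `k` edge-disjoint trails. -/
lemma exists_family_of_dive (s t : V) (hst : t ≠ s) :
    ∀ (k : ℕ) (S : Finset (V × V)), (∀ e ∈ S, e.1 ≠ e.2) →
    (∀ w, dive S w = (if w = s then (k : ℤ) else 0) - (if w = t then (k : ℤ) else 0)) →
    ∃ P : Fin k → List (V × V), IsDisjointFamily (↑S) s t P := by
  intro k
  induction k with
  | zero =>
    intro S hirr hdiv
    exact ⟨fun j => j.elim0, fun j => j.elim0, fun j => j.elim0⟩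
  | succ k ih =>
    intro S hirr hdiv
    obtain ⟨L, hL, hLne⟩ := exists_trail S hirr s t (Ne.symm hst)
      (by rw [hdiv s, if_pos rfl, if_neg (Ne.symm hst)]; omega)
      (by intro w hw1 hw2; rw [hdiv w, if_neg hw1, if_neg hw2]; norm_num)
    set S' := S \ L.toFinset with hS'
    have hLsub : L.toFinset ⊆ S := toFinset_subset_of_isPath hL
    have hdiv' : ∀ w, dive S' w =
        (if w = s then (k : ℤ) else 0) - (if w = t then (k : ℤ) else 0) := by
      intro w
      rw [hS', dive_sdiff hLsub, hdiv w, dive_toFinset hL w]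
      push_cast
      split_ifs <;> ring
    obtain ⟨P', hP'⟩ := ih S' (fun e he => hirr e (Finset.mem_sdiff.1 he).1) hdiv'
    have hsub' : (↑S' : Set (V × V)) ⊆ ↑S := fun e he => by
      have h1 : e ∈ S' := he
      exact Finset.mem_coe.2 (Finset.mem_sdiff.1 h1).1
    refine ⟨Fin.cons L P', ?_, ?_⟩
    · intro j
      refine Fin.cases ?_ ?_ j
      · simpa using hL
      · intro j'
        simpa using isPath_mono hsub' (hP'.1 j')
    · have hPL : ∀ b e, e ∈ P' b → e ∉ L := by
        intro b e he hmem
        have h1 : e ∈ S' := (hP'.1 b).2.1 e he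
        exact (Finset.mem_sdiff.1 h1).2 (List.mem_toFinset.2 hmem)
      intro j j' hjj' e hej hej'
      rcases Fin.eq_zero_or_eq_succ j with rfl | ⟨a, rfl⟩ <;>
        rcases Fin.eq_zero_or_eq_succ j' with rfl | ⟨b, rfl⟩
      · exact hjj' rfl
      · rw [Fin.cons_zero] at hej
        rw [Fin.cons_succ] at hej'
        exact hPL b e hej' hej
      · rw [Fin.cons_succ] at hej
        rw [Fin.cons_zero] at hej'
        exact hPL a e hej hej'
      · rw [Fin.cons_succ] at hej hej'
        have hab : a ≠ b := fun h => hjj' (by rw [h])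
        exact hP'.2 a b hab e hej hej'

lemma notmem_of_mem_sdiffL {S : Finset (V × V)} {L : List (V × V)} {e : V × V}
    (h : e ∈ S \ L.toFinset) : e ∉ L := by
  intro hL
  exact (Finset.mem_sdiff.1 h).2 (List.mem_toFinset.2 hL)

/-- Extraction of a balanced sub-edge-set avoiding in-edges at `v`. -/
lemma exists_trails_avoid (v x : V) (hvx : v ≠ x) :
    ∀ (k : ℕ) (S : Finset (V × V)), (∀ e ∈ S, e.1 ≠ e.2) →
    (∀ w, dive S w = (if w = v then (k : ℤ) else 0) - (if w = x then (k : ℤ) else 0)) →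
    ∃ Dp : Finset (V × V), Dp ⊆ S ∧
      (∀ w, dive Dp w = (if w = v then (k : ℤ) else 0) - (if w = x then (k : ℤ) else 0)) ∧
      ∀ e ∈ Dp, e.2 ≠ v := by
  intro k
  induction k with
  | zero =>
    intro S hirr hdiv
    exact ⟨∅, Finset.empty_subset S, by simp [dive_empty], by simp⟩
  | succ k ih =>
    intro S hirr hdiv
    obtain ⟨L, hL, hLne⟩ := exists_trail S hirr v x hvx
      (by rw [hdiv v, if_pos rfl, if_neg hvx]; omega)
      (by intro w hw1 hw2; rw [hdiv w, if_neg hw1, if_neg hw2]; norm_num)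
    obtain ⟨L', hsubL, hL', hav⟩ := avoid_head_start (Ne.symm (Ne.symm hvx)) hL
    set T := L'.toFinset with hT
    have hTsub : T ⊆ S := toFinset_subset_of_isPath hL'
    have hdivT : ∀ w, dive T w = (if w = v then (1:ℤ) else 0) - (if w = x then 1 else 0) :=
      dive_toFinset hL'
    have hdiv' : ∀ w, dive (S \ T) w =
        (if w = v then (k : ℤ) else 0) - (if w = x then (k : ℤ) else 0) := by
      intro w
      rw [dive_sdiff hTsub, hdiv w, hdivT w]
      split_ifs <;> push_cast <;> ring
    obtain ⟨Dp', hsub', hdivp', hav'⟩ :=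
      ih (S \ T) (fun e he => hirr e (Finset.mem_sdiff.1 he).1) hdiv'
    have hdisj : Disjoint Dp' T := by
      intro A hA hA'
      intro e he
      have := hsub' (hA he)
      simp only [Finset.mem_sdiff] at this
      exact absurd (hA' he) this.2
    refine ⟨Dp' ∪ T, ?_, ?_, ?_⟩
    · intro e he
      rcases Finset.mem_union.1 he with he | he
      · exact (Finset.mem_sdiff.1 (hsub' he)).1
      · exact hTsub he
    · intro w
      rw [dive_union hdisj, hdivp' w, hdivT w]
      split_ifs <;> push_cast <;> ring
    · intro e he
      rcases Finset.mem_union.1 he with he | he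
      · exact hav' e he
      · exact hav e (List.mem_toFinset.1 he)


-- ===== chunk 3 development =====

/-- The lexicographic cost value group. -/
abbrev Gam : Type := ℝ ×ₗ ℤ

/-- Injective index of the edges. -/
noncomputable def idx [Fintype V] (e : V × V) : ℕ := (Fintype.equivFin (V × V)) e

lemma idx_injective [Fintype V] : Function.Injective (idx (V := V)) := by
  intro a b h
  have := (Fintype.equivFin (V × V)).injective (Fin.val_injective (by exact_mod_cast h))
  exact this

/-- The perturbed lexicographic edge cost. -/
noncomputable def wg [Fintype V] (c : V × V → ℝ) (e : V × V) : Gam :=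
  toLex (c e, 2 ^ idx e)

lemma wg_pos [Fintype V] {c : V × V → ℝ} {e : V × V} (hce : 0 ≤ c e) :
    (0 : Gam) < wg c e := by
  rcases lt_or_eq_of_le hce with h | h
  · exact Prod.Lex.lt_iff.2 (Or.inl h)
  · exact Prod.Lex.lt_iff.2 (Or.inr ⟨h, by show (0:ℤ) < 2 ^ idx e; positivity⟩)

/-- Distinct finsets of naturals have distinct sums of powers of two. -/
lemma sum_two_pow_inj : ∀ n (Sn Tn : Finset ℕ), Sn.card + Tn.card ≤ n →
    (∑ k ∈ Sn, (2:ℤ) ^ k) = ∑ k ∈ Tn, (2:ℤ) ^ k → Sn = Tn := by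
  have hrange : ∀ m : ℕ, (∑ k ∈ Finset.range m, (2:ℤ) ^ k) = 2 ^ m - 1 := by
    intro m
    induction m with
    | zero => simp
    | succ m ih => rw [Finset.sum_range_succ, ih]; ring
  have hbound : ∀ (m : ℕ) (Tn : Finset ℕ), (∀ j ∈ Tn, j < m) →
      (∑ k ∈ Tn, (2:ℤ) ^ k) < 2 ^ m := by
    intro m Tn hT
    calc (∑ k ∈ Tn, (2:ℤ) ^ k) ≤ ∑ k ∈ Finset.range m, (2:ℤ)^k := by
          apply Finset.sum_le_sum_of_subset_of_nonneg
          · intro j hj; exact Finset.mem_range.2 (hT j hj)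
          · intro j _ _; positivity
      _ = 2 ^ m - 1 := hrange m
      _ < 2 ^ m := by omega
  intro n
  induction n with
  | zero =>
    intro Sn Tn hcard _
    have h1 : Sn = ∅ := Finset.card_eq_zero.1 (by omega)
    have h2 : Tn = ∅ := Finset.card_eq_zero.1 (by omega)
    rw [h1, h2]
  | succ n ih =>
    intro Sn Tn hcard hsum
    rcases Finset.eq_empty_or_nonempty Sn with rfl | hSne
    · rcases Finset.eq_empty_or_nonempty Tn with rfl | hTne
      · rfl
      · exfalso
        have : (0:ℤ) < ∑ k ∈ Tn, (2:ℤ)^k :=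
          Finset.sum_pos (fun k _ => by positivity) hTne
        simp at hsum
        omega
    · rcases Finset.eq_empty_or_nonempty Tn with rfl | hTne
      · exfalso
        have : (0:ℤ) < ∑ k ∈ Sn, (2:ℤ)^k :=
          Finset.sum_pos (fun k _ => by positivity) hSne
        simp at hsum
        omega
      · have hUne : (Sn ∪ Tn).Nonempty := hSne.mono Finset.subset_union_left
        set m := (Sn ∪ Tn).max' hUne with hm
        have hmem : ∀ (X Y : Finset ℕ), X ∪ Y = Sn ∪ Tn →
            (∑ k ∈ X, (2:ℤ)^k) = (∑ k ∈ Y, (2:ℤ)^k) → m ∈ X → m ∈ Y := by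
          intro X Y hXY hs hmX
          by_contra hmY
          have hYlt : ∀ j ∈ Y, j < m := by
            intro j hj
            have hle : j ≤ m := by
              apply Finset.le_max'
              rw [← hXY]
              exact Finset.mem_union_right _ hj
            rcases lt_or_eq_of_le hle with h | h
            · exact h
            · exact absurd (h ▸ hj) hmY
          have h1 : (2:ℤ)^m ≤ ∑ k ∈ X, (2:ℤ)^k :=
            Finset.single_le_sum (fun k _ => by positivity) hmX
          have h2 := hbound m Y hYlt
          omega
        have hmU : m ∈ Sn ∪ Tn := (Sn ∪ Tn).max'_mem hUne
        have hmS : m ∈ Sn ∧ m ∈ Tn := by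
          rcases Finset.mem_union.1 hmU with h | h
          · exact ⟨h, hmem Sn Tn rfl hsum h⟩
          · exact ⟨hmem Tn Sn (Finset.union_comm _ _) hsum.symm h, h⟩
        have hsum' : (∑ k ∈ Sn.erase m, (2:ℤ)^k) = ∑ k ∈ Tn.erase m, (2:ℤ)^k := by
          have e1 : (∑ k ∈ Sn, (2:ℤ)^k) = 2^m + ∑ k ∈ Sn.erase m, (2:ℤ)^k :=
            (Finset.add_sum_erase _ _ hmS.1).symm
          have e2 : (∑ k ∈ Tn, (2:ℤ)^k) = 2^m + ∑ k ∈ Tn.erase m, (2:ℤ)^k :=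
            (Finset.add_sum_erase _ _ hmS.2).symm
          rw [e1, e2] at hsum
          omega
        have hcard' : (Sn.erase m).card + (Tn.erase m).card ≤ n := by
          have c1 : (Sn.erase m).card < Sn.card := Finset.card_erase_lt_of_mem hmS.1
          have c2 : (Tn.erase m).card < Tn.card := Finset.card_erase_lt_of_mem hmS.2
          omega
        have := ih (Sn.erase m) (Tn.erase m) hcard' hsum'
        have h1 : Sn = insert m (Sn.erase m) := (Finset.insert_erase hmS.1).symm
        have h2 : Tn = insert m (Tn.erase m) := (Finset.insert_erase hmS.2).symm
        rw [h1, h2, this]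

lemma ofLex_sum {γ α β : Type*} [AddCommMonoid α] [AddCommMonoid β]
    (s : Finset γ) (f : γ → α ×ₗ β) :
    ofLex (∑ x ∈ s, f x) = ∑ x ∈ s, ofLex (f x) := rfl

/-- Distinct edge sets have distinct second components of `wg`-sums. -/
lemma sum_wg_inj [Fintype V] {c : V × V → ℝ} {S T : Finset (V × V)}
    (h : (∑ e ∈ S, wg c e) = ∑ e ∈ T, wg c e) : S = T := by
  have h2 : (∑ e ∈ S, (2:ℤ) ^ idx e) = ∑ e ∈ T, (2:ℤ) ^ idx e := by
    have := congrArg (fun x : Gam => (ofLex x).2) h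
    simpa [ofLex_sum, Prod.snd_sum, wg] using this
  have hS : (∑ e ∈ S, (2:ℤ) ^ idx e) = ∑ k ∈ S.image idx, (2:ℤ)^k :=
    (Finset.sum_image (fun a _ b _ hab => idx_injective hab)).symm
  have hT : (∑ e ∈ T, (2:ℤ) ^ idx e) = ∑ k ∈ T.image idx, (2:ℤ)^k :=
    (Finset.sum_image (fun a _ b _ hab => idx_injective hab)).symm
  have himg : S.image idx = T.image idx := by
    apply sum_two_pow_inj ((S.image idx).card + (T.image idx).card) _ _ le_rfl
    rw [← hS, ← hT, h2]
  exact Finset.image_injective idx_injective himg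

/-- first component of wg sums -/
lemma fst_sum_wg [Fintype V] (c : V × V → ℝ) (S : Finset (V × V)) :
    (ofLex (∑ e ∈ S, wg c e)).1 = ∑ e ∈ S, c e := by
  rw [ofLex_sum, Prod.fst_sum]
  simp [wg]

/-- The support of a family. -/
noncomputable def suppF {k : ℕ} (P : Fin k → List (V × V)) : Finset (V × V) :=
  Finset.univ.biUnion fun j => (P j).toFinset

lemma mem_suppF {k : ℕ} {P : Fin k → List (V × V)} {e : V × V} :
    e ∈ suppF P ↔ ∃ j, e ∈ P j := by
  simp [suppF]

/-- The γ-cost of a family. -/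
noncomputable def famG [Fintype V] (c : V × V → ℝ) {k : ℕ}
    (P : Fin k → List (V × V)) : Gam :=
  ∑ j, ((P j).map (wg c)).sum

lemma pairwiseDisjoint_toFinset {F : Set (V × V)} {u v : V} {k : ℕ}
    {P : Fin k → List (V × V)} (hP : IsDisjointFamily F u v P) :
    (↑(Finset.univ : Finset (Fin k)) : Set (Fin k)).PairwiseDisjoint
      (fun j => (P j).toFinset) := by
  intro j _ j' _ hjj'
  show Disjoint ((P j).toFinset) ((P j').toFinset)
  rw [Finset.disjoint_left]
  intro e he he'
  exact hP.2 j j' hjj' e (List.mem_toFinset.1 he) (List.mem_toFinset.1 he')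

lemma famG_eq_sum_suppF [Fintype V] {c : V × V → ℝ} {F : Set (V × V)} {u v : V}
    {k : ℕ} {P : Fin k → List (V × V)} (hP : IsDisjointFamily F u v P) :
    famG c P = ∑ e ∈ suppF P, wg c e := by
  rw [suppF, Finset.sum_biUnion (pairwiseDisjoint_toFinset hP)]
  unfold famG
  congr 1
  ext j
  rw [List.sum_toFinset _ (hP.1 j).1]

lemma famCost_eq_fst [Fintype V] {cc : V × V → ℝ} {k : ℕ}
    (P : Fin k → List (V × V)) :
    (∑ j, ((P j).map cc).sum : ℝ) = (ofLex (famG cc P)).1 := by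
  unfold famG
  rw [ofLex_sum, Prod.fst_sum]
  congr 1
  ext j
  induction (P j) with
  | nil => simp
  | cons e M ih =>
    simp only [List.map_cons, List.sum_cons]
    have : ofLex (wg cc e + (List.map (wg cc) M).sum)
        = ofLex (wg cc e) + ofLex ((List.map (wg cc) M).sum) := rfl
    rw [this]
    simp only [Prod.fst_add]
    rw [ih]
    simp [wg]

lemma dive_suppF {F : Set (V × V)} {u v : V} {k : ℕ}
    {P : Fin k → List (V × V)} (hP : IsDisjointFamily F u v P) (w : V) :
    dive (suppF P) w = (if w = u then (k:ℤ) else 0) - (if w = v then (k:ℤ) else 0) := by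
  have : ∀ (m : ℕ) (J : Finset (Fin k)), J.card = m →
      dive (J.biUnion fun j => (P j).toFinset) w
        = (if w = u then (m:ℤ) else 0) - (if w = v then (m:ℤ) else 0) := by
    intro m
    induction m with
    | zero =>
      intro J hJ
      rw [Finset.card_eq_zero.1 hJ]
      simp
      have : IsPath (∅ : Set (V × V)) w w [] :=
        ⟨by simp, by simp, by constructor, by simp, by simp, fun _ => rfl⟩
      simpa using dive_toFinset this w
    | succ m ih =>
      intro J hJ
      obtain ⟨j, hj⟩ := Finset.card_pos.1 (by omega : 0 < J.card)
      have hJ' : J = insert j (J.erase j) := (Finset.insert_erase hj).symm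
      have hbi : J.biUnion (fun j => (P j).toFinset)
          = (P j).toFinset ∪ (J.erase j).biUnion (fun j => (P j).toFinset) := by
        conv_lhs => rw [hJ']
        rw [Finset.biUnion_insert]
      have hdisj : Disjoint (P j).toFinset
          ((J.erase j).biUnion fun j' => (P j').toFinset) := by
        rw [Finset.disjoint_biUnion_right]
        intro j' hj'
        have hne : j ≠ j' := fun h => (Finset.mem_erase.1 hj').1 h.symm
        rw [Finset.disjoint_left]
        intro e he he'
        exact hP.2 j j' hne e (List.mem_toFinset.1 he) (List.mem_toFinset.1 he')
      rw [hbi, dive_union hdisj, dive_toFinset (hP.1 j) w,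
        ih (J.erase j) (by rw [Finset.card_erase_of_mem hj, hJ]; omega)]
      push_cast
      split_ifs <;> ring
  have := this k Finset.univ (by simp)
  simpa [suppF] using this


lemma pathG_lt_of_proper_sublist [Fintype V] {c : V × V → ℝ} {L' L : List (V × V)}
    (hsub : L'.Sublist L) (hne : L' ≠ L) (hN : L.Nodup)
    (hpos : ∀ e ∈ L, (0:Gam) < wg c e) :
    ((L'.map (wg c)).sum : Gam) < (L.map (wg c)).sum := by
  have hN' : L'.Nodup := hN.sublist hsub
  rw [← List.sum_toFinset _ hN', ← List.sum_toFinset _ hN]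
  have hss : L'.toFinset ⊂ L.toFinset := by
    refine ⟨fun e he => List.mem_toFinset.2 (hsub.mem (List.mem_toFinset.1 he)), ?_⟩
    intro hsup
    apply hne
    apply hsub.eq_of_length
    have : L'.toFinset = L.toFinset :=
      le_antisymm (fun e he => List.mem_toFinset.2 (hsub.mem (List.mem_toFinset.1 he))) hsup
    rw [← List.toFinset_card_of_nodup hN', ← List.toFinset_card_of_nodup hN, this]
  obtain ⟨e, heL, heL'⟩ := Finset.exists_of_ssubset hss
  exact Finset.sum_lt_sum_of_subset hss.subset heL heL'
    (hpos e (List.mem_toFinset.1 heL))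
    (fun f hf _ => (hpos f (List.mem_toFinset.1 hf)).le)

lemma update_family {E : Set (V × V)} {u v : V} {k : ℕ}
    {P : Fin k → List (V × V)} (hP : IsDisjointFamily E u v P)
    {j : Fin k} {L' : List (V × V)} (hL' : IsPath E u v L')
    (hsubm : ∀ e ∈ L', e ∈ P j) :
    IsDisjointFamily E u v (Function.update P j L') := by
  constructor
  · intro j'
    by_cases h : j' = j
    · rw [h, Function.update_self]; exact hL'
    · rw [Function.update_of_ne h]; exact hP.1 j'
  · intro a b hab e hea heb
    by_cases ha : a = j <;> by_cases hb : b = j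
    · exact absurd (ha.trans hb.symm) hab
    · rw [ha, Function.update_self] at hea
      rw [Function.update_of_ne hb] at heb
      rw [ha] at hab
      exact hP.2 j b hab e (hsubm e hea) heb
    · rw [hb, Function.update_self] at heb
      rw [Function.update_of_ne ha] at hea
      rw [hb] at hab
      exact hP.2 a j hab e hea (hsubm e heb)
    · rw [Function.update_of_ne ha] at hea
      rw [Function.update_of_ne hb] at heb
      exact hP.2 a b hab e hea heb

/-- A `famG`-minimal family has paths which never re-enter `s`, never leave `t`,
and enter `t` only by their last edge. -/
lemma good_paths [Fintype V] {E : Set (V × V)} {c : V × V → ℝ} {s t : V}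
    (hst : t ≠ s) (hc : ∀ e ∈ E, 0 ≤ c e) {k : ℕ} {P : Fin k → List (V × V)}
    (hP : IsDisjointFamily E s t P)
    (hmin : ∀ Q : Fin k → List (V × V), IsDisjointFamily E s t Q →
      famG c P ≤ famG c Q) (j : Fin k) :
    (∀ e ∈ P j, e.2 ≠ s) ∧ (∀ e ∈ P j, e.1 ≠ t) ∧ (∀ e ∈ (P j).dropLast, e.2 ≠ t) := by
  have hsstt : s ≠ t := Ne.symm hst
  obtain ⟨L₁, hsub₁, hP₁, hav₁⟩ := avoid_head_start hsstt (hP.1 j)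
  obtain ⟨L₂, hsub₂, hP₂, htl₂, hdl₂⟩ := cut_first_arrival L₁ hP₁ hsstt
  have hsub : L₂.Sublist (P j) := hsub₂.trans hsub₁
  have hav₂ : ∀ e ∈ L₂, e.2 ≠ s := fun e he => hav₁ e (hsub₂.mem he)
  have hL2 : L₂ = P j := by
    by_contra hne
    have hQ : IsDisjointFamily E s t (Function.update P j L₂) :=
      update_family hP hP₂ (fun e he => hsub.mem he)
    have hlt : famG c (Function.update P j L₂) < famG c P := by
      unfold famG
      apply Finset.sum_lt_sum
      · intro j' _
        by_cases h : j' = j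
        · rw [h, Function.update_self]
          exact (pathG_lt_of_proper_sublist hsub hne (hP.1 j).1
            (fun e he => wg_pos (hc e ((hP.1 j).2.1 e he)))).le
        · rw [Function.update_of_ne h]
      · refine ⟨j, Finset.mem_univ j, ?_⟩
        rw [Function.update_self]
        exact pathG_lt_of_proper_sublist hsub hne (hP.1 j).1
          (fun e he => wg_pos (hc e ((hP.1 j).2.1 e he)))
    exact absurd (hmin _ hQ) (not_le.2 hlt)
  rw [← hL2]
  exact ⟨hav₂, htl₂, hdl₂⟩

lemma inD_toFinset_sink {F : Set (V × V)} {u t : V} {L : List (V × V)}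
    (hL : IsPath F u t L) (hne : L ≠ [])
    (hdl : ∀ e ∈ L.dropLast, e.2 ≠ t) :
    (L.toFinset.filter (fun e => e.2 = t)).card = 1 := by
  have hlast : L.getLast hne ∈ L.getLast? := by
    rw [List.getLast?_eq_getLast hne]
    rfl
  have hlt : (L.getLast hne).2 = t := hL.2.2.2.2.1 _ hlast
  have hfe : L.toFinset.filter (fun e => e.2 = t) = {L.getLast hne} := by
    ext e
    simp only [Finset.mem_filter, List.mem_toFinset, Finset.mem_singleton]
    constructor
    · rintro ⟨heL, het⟩
      have hsplit : L = L.dropLast ++ [L.getLast hne] :=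
        (List.dropLast_append_getLast hne).symm
      rw [hsplit, List.mem_append] at heL
      rcases heL with h | h
      · exact absurd het (hdl e h)
      · simpa using h
    · rintro rfl
      exact ⟨List.getLast_mem hne, hlt⟩
  rw [hfe, Finset.card_singleton]

lemma path_ne_nil {F : Set (V × V)} {u t : V} (hut : u ≠ t) {L : List (V × V)}
    (hL : IsPath F u t L) : L ≠ [] :=
  fun h => hut (hL.2.2.2.2.2 h)

lemma inD_suppF_sink [Fintype V] {E : Set (V × V)} {c : V × V → ℝ} {s t : V}
    (hst : t ≠ s) (hc : ∀ e ∈ E, 0 ≤ c e) {k : ℕ} {P : Fin k → List (V × V)}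
    (hP : IsDisjointFamily E s t P)
    (hmin : ∀ Q : Fin k → List (V × V), IsDisjointFamily E s t Q →
      famG c P ≤ famG c Q) :
    ((suppF P).filter (fun e => e.2 = t)).card = k := by
  rw [suppF, Finset.filter_biUnion, Finset.card_biUnion]
  · have : ∀ j : Fin k, ((P j).toFinset.filter (fun e => e.2 = t)).card = 1 := by
      intro j
      exact inD_toFinset_sink (hP.1 j) (path_ne_nil (Ne.symm hst) (hP.1 j))
        (good_paths hst hc hP hmin j).2.2
    rw [Finset.sum_congr rfl (fun j _ => this j)]
    simp
  · intro j _ j' _ hjj'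
    have := pairwiseDisjoint_toFinset hP (Finset.mem_coe.2 (Finset.mem_univ j))
      (Finset.mem_coe.2 (Finset.mem_univ j')) hjj'
    exact Finset.disjoint_filter_filter this

/-- The finiteness of the collection of families. -/
lemma finite_length_le (α : Type*) [Finite α] :
    ∀ n : ℕ, {l : List α | l.length ≤ n}.Finite := by
  intro n
  induction n with
  | zero =>
    apply Set.Finite.subset (Set.finite_singleton ([] : List α))
    intro l hl
    have h0 : l.length = 0 := Nat.le_zero.1 hl
    simp [List.length_eq_zero_iff.1 h0]
  | succ n ih =>
    apply Set.Finite.subset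
      (Set.Finite.insert ([] : List α)
        (Set.Finite.image2 (fun a l => a :: l) Set.finite_univ ih))
    intro l hl
    cases l with
    | nil => simp
    | cons a l' =>
      right
      refine ⟨a, trivial, l', ?_, rfl⟩
      simpa using hl

lemma finite_families [Fintype V] (F : Set (V × V)) (u v : V) (k : ℕ) :
    {P : Fin k → List (V × V) | IsDisjointFamily F u v P}.Finite := by
  apply Set.Finite.subset
    (Set.Finite.pi (fun _ : Fin k => finite_length_le (V × V) (Fintype.card (V × V))))
  intro P hP
  intro j _
  exact (hP.1 j).1.length_le_card

/-- The key `Good` predicate. -/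
def Good [Fintype V] (E : Set (V × V)) (c : V × V → ℝ) (s : V) (i : ℕ) (t : V)
    (S : Finset (V × V)) : Prop :=
  (↑S : Set (V × V)) ⊆ E ∧
  (∀ e ∈ S, e.2 ≠ s) ∧
  (S.filter (fun e => e.2 = t)).card = i ∧
  (∀ w, dive S w = (if w = s then (i:ℤ) else 0) - (if w = t then (i:ℤ) else 0)) ∧
  ∃ P : Fin i → List (V × V), IsDisjointFamily E s t P ∧ suppF P = S ∧
    (∀ Q : Fin i → List (V × V), IsDisjointFamily E s t Q → famG c P ≤ famG c Q) ∧
    (∀ Q : Fin i → List (V × V), IsDisjointFamily E s t Q → famG c Q ≤ famG c P →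
      suppF Q = S)

lemma exists_good [Fintype V] {E : Set (V × V)} {c : V × V → ℝ} {s t : V}
    (hst : t ≠ s) (hc : ∀ e ∈ E, 0 ≤ c e) (i : ℕ)
    (hne : ∃ P : Fin i → List (V × V), IsDisjointFamily E s t P) :
    ∃ S, Good E c s i t S := by
  obtain ⟨P, hPmem, hPmin⟩ := Set.exists_min_image _ (famG c) (finite_families E s t i) hne
  have hmin : ∀ Q : Fin i → List (V × V), IsDisjointFamily E s t Q →
      famG c P ≤ famG c Q := fun Q hQ => hPmin Q hQ
  refine ⟨suppF P, ?_, ?_, inD_suppF_sink hst hc hPmem hmin, dive_suppF hPmem, P,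
    hPmem, rfl, hmin, ?_⟩
  · intro e he
    obtain ⟨j, hj⟩ := mem_suppF.1 he
    exact (hPmem.1 j).2.1 e hj
  · intro e he
    obtain ⟨j, hj⟩ := mem_suppF.1 he
    exact (good_paths hst hc hPmem hmin j).1 e hj
  · intro Q hQ hle
    have heq : famG c Q = famG c P := le_antisymm hle (hmin Q hQ)
    have h1 : (∑ e ∈ suppF Q, wg c e) = ∑ e ∈ suppF P, wg c e := by
      rw [← famG_eq_sum_suppF hQ, ← famG_eq_sum_suppF hPmem, heq]
    exact sum_wg_inj h1


lemma suppF_subset_of_family {u v : V} {k : ℕ}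
    {P : Fin k → List (V × V)} {S : Finset (V × V)}
    (hP : IsDisjointFamily (↑S : Set (V × V)) u v P) : suppF P ⊆ S := by
  intro e he
  obtain ⟨j, hj⟩ := mem_suppF.1 he
  exact (hP.1 j).2.1 e hj

lemma family_mono {F F' : Set (V × V)} (h : F ⊆ F') {u v : V} {k : ℕ}
    {P : Fin k → List (V × V)} (hP : IsDisjointFamily F u v P) :
    IsDisjointFamily F' u v P :=
  ⟨fun j => isPath_mono h (hP.1 j), hP.2⟩

/-- Residual cost nonnegativity. -/
lemma resid_cost_nonneg [Fintype V] {E : Set (V × V)} {c : V × V → ℝ} {s : V}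
    (hirrE : ∀ e ∈ E, e.1 ≠ e.2) (hc : ∀ e ∈ E, 0 ≤ c e)
    {i₂ : ℕ} {t₂ : V} {B : Finset (V × V)} (hst2 : t₂ ≠ s)
    (hB : Good E c s i₂ t₂ B)
    {X Y : Finset (V × V)} (hXE : (↑X : Set (V × V)) ⊆ E) (hXB : Disjoint X B)
    (hYB : Y ⊆ B) (hdiv : ∀ w, dive X w = dive Y w) :
    (∑ e ∈ Y, wg c e) ≤ ∑ e ∈ X, wg c e := by
  obtain ⟨hBE, _, _, hBdiv, PB, hPB, hPBsupp, hPBmin, _⟩ := hB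
  set B' := (B \ Y) ∪ X with hB'
  have hdisj : Disjoint (B \ Y) X :=
    Finset.disjoint_of_subset_left (Finset.sdiff_subset) hXB.symm
  have hB'E : (↑B' : Set (V × V)) ⊆ E := by
    intro e he
    rcases Finset.mem_union.1 he with h | h
    · exact hBE (Finset.mem_coe.2 (Finset.mem_sdiff.1 h).1)
    · exact hXE (Finset.mem_coe.2 h)
  have hB'div : ∀ w, dive B' w =
      (if w = s then (i₂:ℤ) else 0) - (if w = t₂ then (i₂:ℤ) else 0) := by
    intro w
    rw [hB', dive_union hdisj, dive_sdiff hYB, ← hdiv w, ← hBdiv w]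
    ring
  obtain ⟨Q, hQ⟩ := exists_family_of_dive s t₂ hst2 i₂ B'
    (fun e he => hirrE e (hB'E (Finset.mem_coe.2 he))) hB'div
  have hQE : IsDisjointFamily E s t₂ Q := family_mono hB'E hQ
  have h1 : famG c PB ≤ famG c Q := hPBmin Q hQE
  have h2 : famG c Q = ∑ e ∈ suppF Q, wg c e := famG_eq_sum_suppF hQ
  have h3 : (∑ e ∈ suppF Q, wg c e) ≤ ∑ e ∈ B', wg c e :=
    Finset.sum_le_sum_of_subset_of_nonneg (suppF_subset_of_family hQ)
      (fun e he _ => (wg_pos (hc e (hB'E (Finset.mem_coe.2 he)))).le)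
  have h4 : (∑ e ∈ B', wg c e)
      = (∑ e ∈ B, wg c e) - (∑ e ∈ Y, wg c e) + ∑ e ∈ X, wg c e := by
    rw [hB', Finset.sum_union hdisj, Finset.sum_sdiff_eq_sub hYB]
  have h5 : famG c PB = ∑ e ∈ B, wg c e := by
    rw [famG_eq_sum_suppF hPB, hPBsupp]
  have h6 : (∑ e ∈ B, wg c e) ≤
      (∑ e ∈ B, wg c e) - (∑ e ∈ Y, wg c e) + ∑ e ∈ X, wg c e := by
    rw [← h4]
    calc (∑ e ∈ B, wg c e) = famG c PB := h5.symm
      _ ≤ famG c Q := h1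
      _ = ∑ e ∈ suppF Q, wg c e := h2
      _ ≤ ∑ e ∈ B', wg c e := h3
  have h7 : (∑ e ∈ B, wg c e) + 0 ≤ (∑ e ∈ B, wg c e)
      + ((∑ e ∈ X, wg c e) - (∑ e ∈ Y, wg c e)) := by
    calc (∑ e ∈ B, wg c e) + 0 = ∑ e ∈ B, wg c e := by abel
      _ ≤ (∑ e ∈ B, wg c e) - (∑ e ∈ Y, wg c e) + ∑ e ∈ X, wg c e := h6
      _ = (∑ e ∈ B, wg c e) + ((∑ e ∈ X, wg c e) - (∑ e ∈ Y, wg c e)) := by abel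
  exact sub_nonneg.1 (le_of_add_le_add_left h7)

/-- The core exchange lemma. -/
lemma core_exchange [Fintype V] {E : Set (V × V)} {c : V × V → ℝ} {s : V}
    (hirrE : ∀ e ∈ E, e.1 ≠ e.2) (hanti : ∀ e ∈ E, (e.2, e.1) ∉ E)
    (hc : ∀ e ∈ E, 0 ≤ c e)
    {i₁ i₂ : ℕ} {t₁ t₂ : V} {A B : Finset (V × V)}
    (hst1 : t₁ ≠ s) (hst2 : t₂ ≠ s)
    (hA : Good E c s i₁ t₁ A) (hB : Good E c s i₂ t₂ B)
    {v x : V} {k : ℕ} (hvx : v ≠ x)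
    (hdiff : ∀ w, dive A w - dive B w
      = (if w = v then (k:ℤ) else 0) - (if w = x then (k:ℤ) else 0))
    {e₀ : V × V} (he₀A : e₀ ∈ A) (he₀v : e₀.2 = v) (he₀B : e₀ ∉ B) : False := by
  obtain ⟨hAE, _, _, hAdiv, PA, hPA, hPAsupp, hPAmin, hPAuniq⟩ := hA
  have hBE : (↑B : Set (V × V)) ⊆ E := hB.1
  -- the difference graph
  set F0 := A \ B with hF0
  set Bk := (B \ A).image Prod.swap with hBk
  set D := F0 ∪ Bk with hD
  have hdisjFB : Disjoint F0 Bk := by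
    rw [Finset.disjoint_left]
    intro e heF heB
    obtain ⟨f, hf, rfl⟩ := Finset.mem_image.1 heB
    have hfE : f ∈ E := hBE (Finset.mem_coe.2 (Finset.mem_sdiff.1 hf).1)
    have heE : f.swap ∈ E := hAE (Finset.mem_coe.2 (Finset.mem_sdiff.1 heF).1)
    exact hanti f hfE (by simpa [Prod.swap] using heE)
  have hirrD : ∀ e ∈ D, e.1 ≠ e.2 := by
    intro e he
    rcases Finset.mem_union.1 he with h | h
    · exact hirrE e (hAE (Finset.mem_coe.2 (Finset.mem_sdiff.1 h).1))
    · obtain ⟨f, hf, rfl⟩ := Finset.mem_image.1 h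
      have := hirrE f (hBE (Finset.mem_coe.2 (Finset.mem_sdiff.1 hf).1))
      simpa [eq_comm] using this.symm
  have hdiveF0 : ∀ w, dive F0 w = dive A w - dive (A ∩ B) w := by
    intro w
    rw [hF0, show A \ B = A \ (A ∩ B) by rw [Finset.sdiff_inter_self_left],
      dive_sdiff (Finset.inter_subset_left)]
  have hdiveBA : ∀ w, dive (B \ A) w = dive B w - dive (A ∩ B) w := by
    intro w
    rw [show B \ A = B \ (B ∩ A) by rw [Finset.sdiff_inter_self_left],
      dive_sdiff (Finset.inter_subset_left), Finset.inter_comm]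
  have hdiveD : ∀ w, dive D w
      = (if w = v then (k:ℤ) else 0) - (if w = x then (k:ℤ) else 0) := by
    intro w
    rw [hD, dive_union hdisjFB, hBk, dive_image_swap, hdiveF0, hdiveBA, ← hdiff w]
    ring
  obtain ⟨Dp, hDpsub, hDpdiv, hDpav⟩ := exists_trails_avoid v x hvx k D hirrD hdiveD
  -- split Dp into forward and backward parts
  set Xp := Dp ∩ F0 with hXp
  set Ykp := Dp ∩ Bk with hYkp
  have hDpsplit : Dp = Xp ∪ Ykp := by
    rw [hXp, hYkp, ← Finset.inter_union_distrib_left]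
    exact (Finset.inter_eq_left.2 (by rw [← hD]; exact hDpsub)).symm
  have hdisjXY : Disjoint Xp Ykp :=
    Finset.disjoint_of_subset_left Finset.inter_subset_right
      (Finset.disjoint_of_subset_right Finset.inter_subset_right hdisjFB)
  set Yp := Ykp.image Prod.swap with hYp
  have hYkp_eq : Ykp = Yp.image Prod.swap := by
    rw [hYp, Finset.image_image]
    simp [Function.comp_def]
  have hYpBA : Yp ⊆ B \ A := by
    intro e he
    obtain ⟨f, hf, rfl⟩ := Finset.mem_image.1 he
    have : f ∈ Bk := Finset.inter_subset_right (hYkp ▸ hf)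
    obtain ⟨g, hg, rfl⟩ := Finset.mem_image.1 this
    simpa using hg
  have hdivYkp : ∀ w, dive Ykp w = - dive Yp w := by
    intro w
    rw [hYkp_eq, dive_image_swap]
  -- leftovers
  set Xl := F0 \ Xp with hXl
  set Yl := (B \ A) \ Yp with hYl
  have hXpF0 : Xp ⊆ F0 := Finset.inter_subset_right
  have hdivXl : ∀ w, dive Xl w = dive F0 w - dive Xp w :=
    fun w => dive_sdiff hXpF0 w
  have hdivYl : ∀ w, dive Yl w = dive (B \ A) w - dive Yp w :=
    fun w => dive_sdiff hYpBA w
  have hdivDp : ∀ w, dive Xp w - dive Yp w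
      = (if w = v then (k:ℤ) else 0) - (if w = x then (k:ℤ) else 0) := by
    intro w
    rw [← hDpdiv w, hDpsplit, dive_union hdisjXY, hdivYkp]
    ring
  have hdivL : ∀ w, dive Xl w = dive Yl w := by
    intro w
    rw [hdivXl, hdivYl, hdiveF0, hdiveBA]
    have h1 := hdiff w
    have h2 := hdivDp w
    omega
  -- leftover has nonnegative cost
  have hXlE : (↑Xl : Set (V × V)) ⊆ E := by
    intro e he
    have : e ∈ F0 := Finset.sdiff_subset (Finset.mem_coe.1 he)
    exact hAE (Finset.mem_coe.2 (Finset.mem_sdiff.1 this).1)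
  have hXlB : Disjoint Xl B := by
    rw [Finset.disjoint_left]
    intro e he heB
    have : e ∈ F0 := Finset.sdiff_subset he
    exact (Finset.mem_sdiff.1 this).2 heB
  have hYlB : Yl ⊆ B := fun e he =>
    (Finset.mem_sdiff.1 (Finset.sdiff_subset he)).1
  have hR0 : (∑ e ∈ Yl, wg c e) ≤ ∑ e ∈ Xl, wg c e :=
    resid_cost_nonneg hirrE hc hst2 hB hXlE hXlB hYlB hdivL
  -- the combined set C
  set C := (B \ Yp) ∪ Xp with hC
  have hdisjC : Disjoint (B \ Yp) Xp := by
    rw [Finset.disjoint_right]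
    intro e he heB
    have : e ∈ F0 := hXpF0 he
    exact (Finset.mem_sdiff.1 this).2 (Finset.sdiff_subset heB)
  have hCE : (↑C : Set (V × V)) ⊆ E := by
    intro e he
    rcases Finset.mem_union.1 (Finset.mem_coe.1 he) with h | h
    · exact hBE (Finset.mem_coe.2 (Finset.sdiff_subset h))
    · exact hAE (Finset.mem_coe.2 (Finset.mem_sdiff.1 (hXpF0 h)).1)
  have hYpB : Yp ⊆ B := fun e he => (Finset.mem_sdiff.1 (hYpBA he)).1
  have hCdiv : ∀ w, dive C w
      = (if w = s then (i₁:ℤ) else 0) - (if w = t₁ then (i₁:ℤ) else 0) := by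
    intro w
    rw [hC, dive_union hdisjC, dive_sdiff hYpB]
    have h1 := hdiff w
    have h2 := hdivDp w
    have h3 := hAdiv w
    omega
  obtain ⟨P', hP'⟩ := exists_family_of_dive s t₁ hst1 i₁ C
    (fun e he => hirrE e (hCE (Finset.mem_coe.2 he))) hCdiv
  have hP'E : IsDisjointFamily E s t₁ P' := family_mono hCE hP'
  -- cost chain
  have hsum1 : famG c P' = ∑ e ∈ suppF P', wg c e := famG_eq_sum_suppF hP'
  have hsum2 : (∑ e ∈ suppF P', wg c e) ≤ ∑ e ∈ C, wg c e :=
    Finset.sum_le_sum_of_subset_of_nonneg (suppF_subset_of_family hP')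
      (fun e he _ => (wg_pos (hc e (hCE (Finset.mem_coe.2 he)))).le)
  have hsplitA : (∑ e ∈ A, wg c e)
      = (∑ e ∈ A ∩ B, wg c e) + ((∑ e ∈ Xp, wg c e) + ∑ e ∈ Xl, wg c e) := by
    rw [← Finset.sum_inter_add_sum_sdiff A B (wg c)]
    congr 1
    rw [← Finset.sum_union (Finset.disjoint_sdiff : Disjoint Xp (F0 \ Xp)),
      Finset.union_sdiff_of_subset hXpF0]
  have hsplitB : (∑ e ∈ B, wg c e)
      = (∑ e ∈ A ∩ B, wg c e) + ((∑ e ∈ Yp, wg c e) + ∑ e ∈ Yl, wg c e) := by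
    rw [Finset.inter_comm, ← Finset.sum_inter_add_sum_sdiff B A (wg c)]
    congr 1
    rw [← Finset.sum_union (Finset.disjoint_sdiff : Disjoint Yp ((B \ A) \ Yp)),
      Finset.union_sdiff_of_subset hYpBA]
  have hsumC : (∑ e ∈ C, wg c e)
      = (∑ e ∈ B, wg c e) - (∑ e ∈ Yp, wg c e) + ∑ e ∈ Xp, wg c e := by
    rw [hC, Finset.sum_union hdisjC, Finset.sum_sdiff_eq_sub hYpB]
  have hCleA : (∑ e ∈ C, wg c e) ≤ ∑ e ∈ A, wg c e := by
    rw [hsumC, hsplitA, hsplitB]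
    have := add_le_add_right hR0 ((∑ e ∈ A ∩ B, wg c e) + (∑ e ∈ Yp, wg c e)
      + (∑ e ∈ Xp, wg c e) - (∑ e ∈ Yp, wg c e))
    calc (∑ e ∈ A ∩ B, wg c e) + ((∑ e ∈ Yp, wg c e) + ∑ e ∈ Yl, wg c e)
          - (∑ e ∈ Yp, wg c e) + ∑ e ∈ Xp, wg c e
        = ((∑ e ∈ A ∩ B, wg c e) + (∑ e ∈ Yp, wg c e) + (∑ e ∈ Xp, wg c e)
          - (∑ e ∈ Yp, wg c e)) + (∑ e ∈ Yl, wg c e) := by abel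
      _ ≤ ((∑ e ∈ A ∩ B, wg c e) + (∑ e ∈ Yp, wg c e) + (∑ e ∈ Xp, wg c e)
          - (∑ e ∈ Yp, wg c e)) + (∑ e ∈ Xl, wg c e) := this
      _ = (∑ e ∈ A ∩ B, wg c e) + ((∑ e ∈ Xp, wg c e) + ∑ e ∈ Xl, wg c e) := by abel
  have hmin' : famG c P' ≤ famG c PA := by
    rw [hsum1, famG_eq_sum_suppF hPA, hPAsupp]
    exact le_trans hsum2 hCleA
  have hsupp' : suppF P' = A := hPAuniq P' hP'E hmin'
  have he₀supp : e₀ ∈ suppF P' := hsupp' ▸ he₀A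
  have he₀C : e₀ ∈ C := suppF_subset_of_family hP' he₀supp
  rcases Finset.mem_union.1 he₀C with h | h
  · exact he₀B (Finset.sdiff_subset h)
  · have : e₀ ∈ Dp := Finset.inter_subset_left (hXp ▸ h)
    exact hDpav e₀ this he₀v


/-- If `G` is `p`-edge-outconnected from `s`, there are nested
edge sets `H_1 ⊆ H_2 ⊆ … ⊆ H_p ⊆ E` such that each `H_i` is an optimal-size
single-source `i`-multipath preserver: no edge of `H_i` enters `s`, each
`t ≠ s` has exactly `i` incoming edges in `H_i` (so `|H_i| = i (n-1)`), and
`H_i` contains, for every `t ≠ s`, a family of `i` edge-disjoint paths from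
`s` to `t` of minimum total cost in `G`. -/
theorem exists_nested_preservers [Fintype V]
    (E : Set (V × V)) (c : V × V → ℝ) (s : V)
    (hirr : ∀ e ∈ E, e.1 ≠ e.2)
    (hanti : ∀ e ∈ E, (e.2, e.1) ∉ E)
    (hc : ∀ e ∈ E, 0 ≤ c e)
    (p : ℕ) (hp : 1 ≤ p)
    (hconn : ∀ t, t ≠ s → ∃ P : Fin p → List (V × V), IsDisjointFamily E s t P) :
    ∃ Hc : ℕ → Set (V × V),
      (∀ i, 1 ≤ i → i < p → Hc i ⊆ Hc (i + 1)) ∧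
      ∀ i, 1 ≤ i → i ≤ p →
        Hc i ⊆ E ∧
        (∀ e ∈ Hc i, e.2 ≠ s) ∧
        (∀ t, t ≠ s → {e ∈ Hc i | e.2 = t}.ncard = i) ∧
        (Hc i).ncard = i * (Fintype.card V - 1) ∧
        ∀ t, t ≠ s → ∃ P : Fin i → List (V × V),
          IsMinFamily E c s t P ∧ ∀ j, ∀ e ∈ P j, e ∈ Hc i := by
  classical
  have fstmono : ∀ a b : Gam, a ≤ b → (ofLex a).1 ≤ (ofLex b).1 := by
    intro a b hab
    rcases (Prod.Lex.le_iff (x := a) (y := b)).1 hab with h | h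
    · exact h.le
    · exact le_of_eq h.1
  -- choose the good sets
  have hGoodEx : ∀ i t, ∃ S : Finset (V × V),
      (1 ≤ i → i ≤ p → t ≠ s → Good E c s i t S) := by
    intro i t
    by_cases h : 1 ≤ i ∧ i ≤ p ∧ t ≠ s
    · obtain ⟨h1, h2, h3⟩ := h
      obtain ⟨P, hP⟩ := hconn t h3
      have hfam : ∃ P : Fin i → List (V × V), IsDisjointFamily E s t P := by
        refine ⟨fun j => P (Fin.castLE h2 j), fun j => hP.1 _, ?_⟩
        intro j j' hjj' e he
        refine hP.2 _ _ (fun hh => hjj' ?_) e he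
        have hval : (Fin.castLE h2 j).val = (Fin.castLE h2 j').val := congrArg Fin.val hh
        exact Fin.ext hval
      obtain ⟨S, hSg⟩ := exists_good h3 hc i hfam
      exact ⟨S, fun _ _ _ => hSg⟩
    · exact ⟨∅, fun h1 h2 h3 => absurd ⟨h1, h2, h3⟩ h⟩
  choose S hS using hGoodEx
  -- consistency of in-edges across targets
  have hcons : ∀ i t v, 1 ≤ i → i ≤ p → t ≠ s → v ≠ s →
      ∀ e ∈ S i t, e.2 = v → e ∈ S i v := by
    intro i t v h1 h2 h3 hv e he hev
    by_cases htv : t = v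
    · rwa [← htv]
    · by_contra heB
      have hvt : v ≠ t := fun hh => htv hh.symm
      have hAd := (hS i t h1 h2 h3).2.2.2.1
      have hBd := (hS i v h1 h2 hv).2.2.2.1
      refine core_exchange hirr hanti hc h3 hv (hS i t h1 h2 h3) (hS i v h1 h2 hv)
        (v := v) (x := t) (k := i) hvt ?_ he hev heB
      intro w
      rw [hAd w, hBd w]
      split_ifs <;> ring
  -- nestedness of in-edges at a fixed target
  have hnest1 : ∀ i v, 1 ≤ i → i + 1 ≤ p → v ≠ s →
      ∀ e ∈ S i v, e.2 = v → e ∈ S (i+1) v := by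
    intro i v h1 h2 hv e he hev
    by_contra heB
    have hAd := (hS i v h1 (le_trans (Nat.le_succ i) h2) hv).2.2.2.1
    have hBd := (hS (i+1) v (by omega) h2 hv).2.2.2.1
    refine core_exchange hirr hanti hc hv hv (hS i v h1 (le_trans (Nat.le_succ i) h2) hv)
      (hS (i+1) v (by omega) h2 hv) (v := v) (x := s) (k := 1) hv ?_ he hev heB
    intro w
    rw [hAd w, hBd w]
    push_cast
    split_ifs <;> ring
  -- definition of the preservers
  set H : ℕ → Finset (V × V) := fun i =>
    Finset.univ.biUnion (fun t => if 1 ≤ i ∧ i ≤ p ∧ t ≠ s then S i t else ∅) with hH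
  have hmemH : ∀ i e, e ∈ H i ↔ ∃ t, (1 ≤ i ∧ i ≤ p ∧ t ≠ s) ∧ e ∈ S i t := by
    intro i e
    simp only [hH, Finset.mem_biUnion, Finset.mem_univ, true_and]
    constructor
    · rintro ⟨t, ht⟩
      by_cases hcond : 1 ≤ i ∧ i ≤ p ∧ t ≠ s
      · rw [if_pos hcond] at ht
        exact ⟨t, hcond, ht⟩
      · rw [if_neg hcond] at ht
        simp at ht
    · rintro ⟨t, hcond, ht⟩
      exact ⟨t, by rw [if_pos hcond]; exact ht⟩
  have hheads : ∀ i, ∀ e ∈ H i, e.2 ≠ s := by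
    intro i e he
    obtain ⟨t, hcond, het⟩ := (hmemH i e).1 he
    exact (hS i t hcond.1 hcond.2.1 hcond.2.2).2.1 e het
  have hHsubE : ∀ i, (↑(H i) : Set (V × V)) ⊆ E := by
    intro i e he
    obtain ⟨t, hcond, het⟩ := (hmemH i e).1 (Finset.mem_coe.1 he)
    exact (hS i t hcond.1 hcond.2.1 hcond.2.2).1 (Finset.mem_coe.2 het)
  have hfilter : ∀ i t, 1 ≤ i → i ≤ p → t ≠ s →
      (H i).filter (fun e => e.2 = t) = (S i t).filter (fun e => e.2 = t) := by
    intro i t h1 h2 h3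
    ext e
    simp only [Finset.mem_filter]
    constructor
    · rintro ⟨he, het⟩
      obtain ⟨t', hcond, het'⟩ := (hmemH i e).1 he
      exact ⟨hcons i t' t h1 h2 hcond.2.2 h3 e het' het, het⟩
    · rintro ⟨he, het⟩
      exact ⟨(hmemH i e).2 ⟨t, ⟨h1, h2, h3⟩, he⟩, het⟩
  refine ⟨fun i => (↑(H i) : Set (V × V)), ?_, ?_⟩
  · -- nestedness
    intro i h1 h2 e he
    obtain ⟨t, hcond, het⟩ := (hmemH i e).1 (Finset.mem_coe.1 he)
    have hv : e.2 ≠ s := (hS i t hcond.1 hcond.2.1 hcond.2.2).2.1 e het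
    have he2 : e ∈ S i e.2 := hcons i t e.2 h1 (le_of_lt h2) hcond.2.2 hv e het rfl
    have he3 : e ∈ S (i+1) e.2 := hnest1 i e.2 h1 h2 hv e he2 rfl
    exact Finset.mem_coe.2 ((hmemH (i+1) e).2 ⟨e.2, ⟨by omega, h2, hv⟩, he3⟩)
  · intro i h1 h2
    refine ⟨hHsubE i, fun e he => hheads i e (Finset.mem_coe.1 he), ?_, ?_, ?_⟩
    · -- in-degree
      intro t h3
      have hset : {e ∈ (↑(H i) : Set (V × V)) | e.2 = t}
          = ↑((H i).filter (fun e => e.2 = t)) := by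
        rw [Finset.coe_filter]
        rfl
      rw [hset, Set.ncard_coe_finset, hfilter i t h1 h2 h3,
        (hS i t h1 h2 h3).2.2.1]
    · -- total size
      have hcount : (H i).card = ∑ v ∈ Finset.univ,
          ((H i).filter (fun e => e.2 = v)).card :=
        Finset.card_eq_sum_card_fiberwise (fun e _ => Finset.mem_univ e.2)
      have hterm : ∀ v ∈ (Finset.univ : Finset V),
          ((H i).filter (fun e => e.2 = v)).card = if v = s then 0 else i := by
        intro v _
        rcases eq_or_ne v s with rfl | hv
        · rw [if_pos rfl, Finset.card_eq_zero, Finset.filter_eq_empty_iff]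
          intro e he
          exact hheads i e he
        · rw [if_neg hv, hfilter i v h1 h2 hv, (hS i v h1 h2 hv).2.2.1]
      have : (H i).card = ∑ v ∈ Finset.univ, (if v = s then 0 else i) := by
        rw [hcount]
        exact Finset.sum_congr rfl hterm
      rw [Set.ncard_coe_finset, this, ← Finset.add_sum_erase _ _ (Finset.mem_univ s),
        if_pos rfl, zero_add,
        Finset.sum_congr rfl (fun v hv => if_neg (Finset.mem_erase.1 hv).1),
        Finset.sum_const, Finset.card_erase_of_mem (Finset.mem_univ s),
        Finset.card_univ, smul_eq_mul, Nat.mul_comm]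
    · -- the min families
      intro t h3
      obtain ⟨P, hPfam, hPsupp, hPmin, _⟩ := (hS i t h1 h2 h3).2.2.2.2
      refine ⟨P, ⟨hPfam, ?_⟩, ?_⟩
      · intro Q hQ
        have := fstmono _ _ (hPmin Q hQ)
        rw [← famCost_eq_fst, ← famCost_eq_fst] at this
        exact this
      · intro j e he
        have : e ∈ suppF P := mem_suppF.2 ⟨j, he⟩
        rw [hPsupp] at this
        exact Finset.mem_coe.2 ((hmemH i e).2 ⟨t, ⟨h1, h2, h3⟩, this⟩)

end MultipathPreserver
end

section
/- Let t ≠ s, let k ≥ 0, and suppose S ⊆ E induces k edge-disjoint simple paths from s to t of minimum total cost in G (with S = ∅ if k = 0). Then every path in the residual network G_S that ends at t has nonnegative cost with respect to c_S. -/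
open scoped Classical

namespace MultipathPreserver

variable {V : Type*}

/-!
Let `L` be a residual path ending at `t`. Augmenting the edge set of an optimal family along
`L` (adding its forward edges, deleting the edges it traverses backwards) gives an edge set `T`
of cost `c(S) + c_S(L)` whose net outflow is that of `k` units sent from `s` to `t` plus one
unit sent from `u` to `t`: at least `k` at `s` and negative only at `t`. A trail started at a vertex of positive net outflow can only
get stuck at a vertex of negative net outflow, that is at `t`; peeling off `k` such trails
yields `k` edge-disjoint paths from `s` to `t` inside `T`, and since the leftover edges cost
nonnegatively, optimality gives `c(S) ≤ c(S) + c_S(L)`.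
-/

section Paths

variable {F : Set (V × V)} {u w : V} {e : V × V} {L : List (V × V)}

-- Restates `IsPath` with `List.IsChain`, which replaces the deprecated `List.Chain'`.
lemma isPath_iff : IsPath F u w L ↔ L.Nodup ∧ (∀ e ∈ L, e ∈ F) ∧
    L.IsChain (fun e f => e.2 = f.1) ∧ (∀ e ∈ L.head?, e.1 = u) ∧
    (∀ e ∈ L.getLast?, e.2 = w) ∧ (L = [] → u = w) :=
  Iff.rfl

lemma IsPath.nil (F : Set (V × V)) (u : V) : IsPath F u u [] := by
  simp [isPath_iff]

lemma isPath_cons_iff :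
    IsPath F u w (e :: L) ↔ e.1 = u ∧ e ∈ F ∧ e ∉ L ∧ IsPath F e.2 w L := by
  cases L with
  | nil => simp [isPath_iff, eq_comm, and_left_comm]
  | cons f L =>
    simp only [isPath_iff, List.nodup_cons, List.mem_cons, List.isChain_cons_cons,
      List.head?_cons, Option.mem_def, Option.some.injEq, List.getLast?_cons_cons, forall_eq',
      reduceCtorEq, IsEmpty.forall_iff, forall_eq_or_imp]
    tauto

lemma IsPath.mono {F' : Set (V × V)} (h : IsPath F u w L) (hF : F ⊆ F') : IsPath F' u w L :=
  ⟨h.1, fun e he => hF (h.2.1 e he), h.2.2⟩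

end Paths

section NetOutflow

variable {F : Set (V × V)} {u w : V} {L : List (V × V)}

noncomputable def edgeExcess (e : V × V) : V → ℤ := Pi.single e.1 1 - Pi.single e.2 1

noncomputable def netOutflow (T : Finset (V × V)) : V → ℤ := ∑ e ∈ T, edgeExcess e

lemma edgeExcess_apply (e : V × V) (v : V) :
    edgeExcess e v = (if v = e.1 then 1 else 0) - (if v = e.2 then 1 else 0) := by
  simp [edgeExcess, Pi.single_apply]

lemma edgeExcess_swap (e : V × V) : edgeExcess e.swap = -edgeExcess e := by
  simp [edgeExcess]

lemma edgeExcess_self (u : V) : edgeExcess (u, u) = 0 := by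
  simp [edgeExcess]

lemma edgeExcess_add_edgeExcess (u x w : V) :
    edgeExcess (u, x) + edgeExcess (x, w) = edgeExcess (u, w) := by
  simp [edgeExcess]

lemma netOutflow_apply (T : Finset (V × V)) (v : V) :
    netOutflow T v = ∑ e ∈ T, edgeExcess e v :=
  Finset.sum_apply v T edgeExcess

lemma IsPath.sum_map_edgeExcess (h : IsPath F u w L) : (L.map edgeExcess).sum = edgeExcess (u, w) := by
  induction L generalizing u with
  | nil => rw [h.2.2.2.2.2 rfl, List.map_nil, List.sum_nil, edgeExcess_self]
  | cons e L ih =>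
    obtain ⟨rfl, -, -, hL⟩ := isPath_cons_iff.1 h
    rw [List.map_cons, List.sum_cons, ih hL, edgeExcess_add_edgeExcess]

lemma IsPath.netOutflow_toFinset (h : IsPath F u w L) : netOutflow L.toFinset = edgeExcess (u, w) := by
  rw [netOutflow, List.sum_toFinset _ h.1, h.sum_map_edgeExcess]

lemma exists_isPath_of_netOutflow_pos (T : Finset (V × V)) {x : V} (hx : 0 < netOutflow T x) :
    ∃ y L, IsPath T x y L ∧ netOutflow T y < 0 := by
  induction T using Finset.strongInduction generalizing x with
  | H T ih =>
  obtain ⟨e, heT, hex⟩ : ∃ e ∈ T, 0 < edgeExcess e x := by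
    by_contra! h
    exact hx.not_ge (netOutflow_apply T x ▸ Finset.sum_nonpos h)
  have he : x = e.1 ∧ x ≠ e.2 := by
    rw [edgeExcess_apply] at hex
    split_ifs at hex <;> simp_all
  have herase (v : V) : netOutflow T v = netOutflow (T.erase e) v + edgeExcess e v := by
    simp only [netOutflow_apply, Finset.sum_erase_add T _ heT]
  by_cases hneg : netOutflow T e.2 < 0
  · exact ⟨e.2, [e], isPath_cons_iff.2 ⟨he.1.symm, heT, List.not_mem_nil, .nil _ _⟩, hneg⟩
  have hpos : 0 < netOutflow (T.erase e) e.2 := by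
    have := herase e.2
    rw [edgeExcess_apply, if_pos rfl, if_neg (Ne.symm (he.1 ▸ he.2))] at this
    omega
  obtain ⟨y, L, hL, hy⟩ := ih (T.erase e) (Finset.erase_ssubset heT) hpos
  refine ⟨y, e :: L, isPath_cons_iff.2 ⟨he.1.symm, heT, fun h => ?_, hL.mono ?_⟩, ?_⟩
  · exact Finset.notMem_erase e T (hL.2.1 e h)
  · exact Finset.coe_subset.2 (Finset.erase_subset e T)
  · have hyx : y ≠ x := by
      rintro rfl
      have := herase y
      rw [edgeExcess_apply, if_pos he.1, if_neg he.2] at this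
      omega
    rw [herase, edgeExcess_apply, if_neg (he.1 ▸ hyx)]
    split_ifs <;> omega

end NetOutflow

section Families

variable {F : Set (V × V)} {u w : V} {k : ℕ} {P : Fin k → List (V × V)}

noncomputable def familyEdges (P : Fin k → List (V × V)) : Finset (V × V) :=
  Finset.univ.biUnion fun j => (P j).toFinset

lemma coe_familyEdges (P : Fin k → List (V × V)) :
    (familyEdges P : Set (V × V)) = {e | ∃ j, e ∈ P j} := by
  ext e
  simp [familyEdges]

lemma IsDisjointFamily.mono {F' : Set (V × V)} (h : IsDisjointFamily F u w P) (hF : F ⊆ F') :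
    IsDisjointFamily F' u w P :=
  ⟨fun j => (h.1 j).mono hF, h.2⟩

lemma IsDisjointFamily.cons {L : List (V × V)} (hP : IsDisjointFamily F u w P)
    (hL : IsPath F u w L) (hLP : ∀ j, ∀ e ∈ L, e ∉ P j) :
    IsDisjointFamily F u w (Fin.cons L P : Fin (k + 1) → List (V × V)) := by
  refine ⟨Fin.cases hL hP.1, fun j j' hjj' e hj hj' => ?_⟩
  induction j using Fin.cases <;> induction j' using Fin.cases
  · exact hjj' rfl
  · exact hLP _ e hj hj'
  · exact hLP _ e hj' hj
  · exact hP.2 _ _ (fun h => hjj' (congrArg Fin.succ h)) e hj hj'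

lemma IsDisjointFamily.sum_familyEdges {M : Type*} [AddCommMonoid M]
    (h : IsDisjointFamily F u w P) (g : V × V → M) :
    ∑ e ∈ familyEdges P, g e = ∑ j, ((P j).map g).sum := by
  rw [familyEdges, Finset.sum_biUnion]
  · exact Finset.sum_congr rfl fun j _ => List.sum_toFinset g (h.1 j).1
  · intro j _ j' _ hjj'
    exact Finset.disjoint_left.2 fun e he he' =>
      h.2 j j' hjj' e (List.mem_toFinset.1 he) (List.mem_toFinset.1 he')

lemma IsDisjointFamily.famCost_eq (h : IsDisjointFamily F u w P) (c : V × V → ℝ) :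
    famCost c P = ∑ e ∈ familyEdges P, c e :=
  (h.sum_familyEdges c).symm

lemma IsDisjointFamily.netOutflow_familyEdges (h : IsDisjointFamily F u w P) :
    netOutflow (familyEdges P) = k • edgeExcess (u, w) := by
  simp [netOutflow, h.sum_familyEdges, fun j => (h.1 j).sum_map_edgeExcess]

lemma IsDisjointFamily.famCost_le_sum {T : Finset (V × V)} {c : V × V → ℝ}
    (h : IsDisjointFamily T u w P) (hc : ∀ e ∈ T, 0 ≤ c e) : famCost c P ≤ ∑ e ∈ T, c e := by
  rw [h.famCost_eq]
  refine Finset.sum_le_sum_of_subset_of_nonneg (fun e he => ?_) fun e he _ => hc e he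
  obtain ⟨j, hj⟩ : ∃ j, e ∈ P j := by simpa [familyEdges] using he
  exact (h.1 j).2.1 e hj

lemma exists_isDisjointFamily_of_netOutflow {s t : V} (k : ℕ) (T : Finset (V × V))
    (hneg : ∀ v, netOutflow T v < 0 → v = t) (hs : (k : ℤ) ≤ netOutflow T s) :
    ∃ P : Fin k → List (V × V), IsDisjointFamily T s t P := by
  induction k generalizing T with
  | zero => exact ⟨Fin.elim0, fun j => j.elim0, fun j => j.elim0⟩
  | succ k ih =>
    obtain ⟨y, L, hL, hy⟩ := exists_isPath_of_netOutflow_pos T (by omega : 0 < netOutflow T s)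
    obtain rfl := hneg y hy
    have hLT : L.toFinset ⊆ T := fun e he => hL.2.1 e (List.mem_toFinset.1 he)
    have hrest (v : V) :
        netOutflow (T \ L.toFinset) v = netOutflow T v - edgeExcess (s, y) v := by
      simp only [netOutflow_apply, Finset.sum_sdiff_eq_sub hLT, ← hL.netOutflow_toFinset]
    have hys : y ≠ s := by
      rintro rfl
      omega
    have hneg' (v : V) (hv : netOutflow (T \ L.toFinset) v < 0) : v = y := by
      rw [hrest, edgeExcess_apply] at hv
      by_cases hvs : v = s
      · subst hvs
        simp only [if_neg hys.symm] at hv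
        omega
      · by_contra hvy
        simp only [if_neg hvs, if_neg hvy] at hv
        exact hvy (hneg v (by omega))
    have hs' : (k : ℤ) ≤ netOutflow (T \ L.toFinset) s := by
      rw [hrest, edgeExcess_apply, if_pos rfl, if_neg hys.symm]
      omega
    obtain ⟨P, hP⟩ := ih (T \ L.toFinset) hneg' hs'
    refine ⟨Fin.cons L P, (hP.mono ?_).cons hL fun j e heL heP => ?_⟩
    · exact Finset.coe_subset.2 Finset.sdiff_subset
    · exact (Finset.mem_sdiff.1 ((hP.1 j).2.1 e heP)).2 (List.mem_toFinset.2 heL)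

end Families

section Augment

variable {S : Finset (V × V)} {L : List (V × V)}

noncomputable def augment (S : Finset (V × V)) (L : List (V × V)) : Finset (V × V) :=
  (S \ {e ∈ L.toFinset | e.swap ∈ S}.image Prod.swap) ∪ {e ∈ L.toFinset | e.swap ∉ S}

lemma swap_mem_of_mem_resEdges {E : Set (V × V)} {e : V × V} (he : e ∈ resEdges E S)
    (heS : e ∈ S) : e.swap ∈ S := by
  rcases he with ⟨-, he⟩ | he
  · exact absurd heS he
  · exact he

lemma sum_augment {M : Type*} [AddCommGroup M] (g : V × V → M) (hnd : L.Nodup)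
    (hL : ∀ e ∈ L, e ∈ S → e.swap ∈ S) :
    ∑ e ∈ augment S L, g e =
      ∑ e ∈ S, g e + (L.map fun e => if e.swap ∈ S then -g e.swap else g e).sum := by
  have hback : {e ∈ L.toFinset | e.swap ∈ S}.image Prod.swap ⊆ S := by
    intro e he
    obtain ⟨f, hf, rfl⟩ := Finset.mem_image.1 he
    exact (Finset.mem_filter.1 hf).2
  have hdisj : Disjoint (S \ {e ∈ L.toFinset | e.swap ∈ S}.image Prod.swap)
      {e ∈ L.toFinset | e.swap ∉ S} := by
    refine Finset.disjoint_right.2 fun e he heS => ?_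
    obtain ⟨heL, hswap⟩ := Finset.mem_filter.1 he
    exact hswap (hL e (List.mem_toFinset.1 heL) (Finset.mem_sdiff.1 heS).1)
  rw [augment, Finset.sum_union hdisj, Finset.sum_sdiff_eq_sub hback,
    Finset.sum_image Prod.swap_injective.injOn, ← List.sum_toFinset _ hnd, Finset.sum_ite,
    Finset.sum_neg_distrib]
  abel

lemma IsPath.netOutflow_augment {E : Set (V × V)} {u w : V} (h : IsPath (resEdges E S) u w L) :
    netOutflow (augment S L) = netOutflow S + edgeExcess (u, w) := by
  rw [netOutflow, sum_augment edgeExcess h.1 fun e he => swap_mem_of_mem_resEdges (h.2.1 e he)]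
  simp only [edgeExcess_swap, neg_neg, ite_self, h.sum_map_edgeExcess, netOutflow]

lemma IsPath.sum_augment_eq_add_pathCost {E : Set (V × V)} {u w : V}
    (h : IsPath (resEdges E S) u w L) (c : V × V → ℝ) :
    ∑ e ∈ augment S L, c e = ∑ e ∈ S, c e + pathCost (resCost c S) L := by
  rw [sum_augment c h.1 fun e he => swap_mem_of_mem_resEdges (h.2.1 e he)]
  congr 3 with e
  simp only [resCost, Finset.mem_coe]
  rfl

lemma coe_augment_subset {E : Set (V × V)} (hSE : ↑S ⊆ E) (hL : ∀ e ∈ L, e ∈ resEdges E S) :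
    ↑(augment S L) ⊆ E := by
  intro e he
  rcases Finset.mem_union.1 he with he | he
  · exact hSE (Finset.mem_sdiff.1 he).1
  · obtain ⟨heL, hswap⟩ := Finset.mem_filter.1 he
    rcases hL e (List.mem_toFinset.1 heL) with he | he
    · exact he.1
    · exact absurd he hswap

end Augment

theorem residual_paths_to_target_nonneg_general
    (E : Set (V × V)) (c : V × V → ℝ) (s : V)
    (hc : ∀ e ∈ E, 0 ≤ c e)
    (t : V) (ht : t ≠ s)
    (k : ℕ) (S : Set (V × V)) (hSE : S ⊆ E)
    (hSind : InducesSimple E c s t k S) :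
    ∀ (u : V) (L : List (V × V)), IsPath (resEdges E S) u t L →
      0 ≤ pathCost (resCost c S) L := by
  obtain ⟨P, ⟨hP, hPmin⟩, -, rfl⟩ := hSind
  intro u L hL
  rw [← coe_familyEdges] at hL hSE ⊢
  set T := augment (familyEdges P) L
  have hTE : ↑T ⊆ E := coe_augment_subset hSE hL.2.1
  have hout (v : V) : netOutflow T v = k * edgeExcess (s, t) v + edgeExcess (u, t) v := by
    simp [T, hL.netOutflow_augment, hP.netOutflow_familyEdges]
  have hneg (v : V) (hv : netOutflow T v < 0) : v = t := by
    by_contra hvt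
    rw [hout, edgeExcess_apply, edgeExcess_apply, if_neg hvt] at hv
    split_ifs at hv <;> omega
  have hs : (k : ℤ) ≤ netOutflow T s := by
    rw [hout, edgeExcess_apply, edgeExcess_apply, if_pos rfl, if_neg ht.symm]
    split_ifs <;> omega
  obtain ⟨Q, hQ⟩ := exists_isDisjointFamily_of_netOutflow k T hneg hs
  have hPQ := hPmin Q (hQ.mono hTE)
  have hQT := hQ.famCost_le_sum fun e he => hc e (hTE he)
  rw [hL.sum_augment_eq_add_pathCost, ← hP.famCost_eq] at hQT
  linarith

/-- Lemma `positive`. If `S` induces `k` edge-disjoint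
simple paths from `s` to `t` of minimum total cost in `G`, then every path of
the residual network `G_S` ending at `t` has nonnegative cost w.r.t. `c_S`. -/
theorem residual_paths_to_target_nonneg [Fintype V]
    (E : Set (V × V)) (c : V × V → ℝ) (s : V)
    (hirr : ∀ e ∈ E, e.1 ≠ e.2)
    (hanti : ∀ e ∈ E, (e.2, e.1) ∉ E)
    (hc : ∀ e ∈ E, 0 ≤ c e)
    (t : V) (ht : t ≠ s)
    (k : ℕ) (S : Set (V × V)) (hSE : S ⊆ E)
    (hS0 : k = 0 → S = ∅)
    (hSind : InducesSimple E c s t k S) :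
    ∀ (u : V) (L : List (V × V)), IsPath (resEdges E S) u t L →
      0 ≤ pathCost (resCost c S) L :=
  residual_paths_to_target_nonneg_general E c s hc t ht k S hSE hSind

end MultipathPreserver
end

section
/- Let p ≥ 1, let t ≠ s, and suppose there exists at least one family of p pairwise edge-disjoint paths from s to t in G. Let P be such a family whose total cost is minimum among all families of p pairwise edge-disjoint paths from s to t in G, and let Q be any family of p pairwise edge-disjoint paths from s to t in G. Then max_{π ∈ P} c(π) ≤ p · max_{π ∈ Q} c(π); that is, the minimum-total-cost solution is a factor-p approximation for minimizing the maximum cost of a path in a family of p pairwise edge-disjoint paths from s to t. -/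
open scoped Classical

namespace MultipathPreserver

variable {V : Type*}

theorem pathCost_nonneg_of_isPath {F : Set (V × V)} {w : V × V → ℝ}
    (hw : ∀ e ∈ F, 0 ≤ w e) {u v : V} {L : List (V × V)} (hL : IsPath F u v L) :
    0 ≤ pathCost w L :=
  List.sum_nonneg fun _ hx => by
    obtain ⟨e, he, rfl⟩ := List.mem_map.1 hx
    exact hw e (hL.2.1 e he)

theorem sup'_pathCost_le_famCost {w : V × V → ℝ} {k : ℕ} {P : Fin k → List (V × V)}
    (hP : ∀ j, 0 ≤ pathCost w (P j)) (hne : (Finset.univ : Finset (Fin k)).Nonempty) :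
    Finset.univ.sup' hne (fun j => pathCost w (P j)) ≤ famCost w P :=
  Finset.sup'_le _ _ fun j _ => Finset.single_le_sum (fun i _ => hP i) (Finset.mem_univ j)

theorem famCost_le_mul_sup'_pathCost (w : V × V → ℝ) {k : ℕ} (P : Fin k → List (V × V))
    (hne : (Finset.univ : Finset (Fin k)).Nonempty) :
    famCost w P ≤ (k : ℝ) * Finset.univ.sup' hne (fun j => pathCost w (P j)) := by
  simpa [famCost] using Finset.sum_le_card_nsmul Finset.univ (fun j => pathCost w (P j)) _
    fun j _ => Finset.le_sup' (fun j => pathCost w (P j)) (Finset.mem_univ j)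

theorem min_cost_family_bottleneck_approx_general
    (E : Set (V × V)) (c : V × V → ℝ) (s : V)
    (hc : ∀ e ∈ E, 0 ≤ c e)
    (p : ℕ) (hp : 1 ≤ p)
    (t : V)
    (P Q : Fin p → List (V × V))
    (hP : IsMinFamily E c s t P)
    (hQ : IsDisjointFamily E s t Q) :
    Finset.univ.sup' ⟨⟨0, hp⟩, Finset.mem_univ _⟩ (fun j => pathCost c (P j)) ≤
      (p : ℝ) *
        Finset.univ.sup' ⟨⟨0, hp⟩, Finset.mem_univ _⟩
          (fun j => pathCost c (Q j)) :=
  calc _ ≤ famCost c P :=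
        sup'_pathCost_le_famCost (fun j => pathCost_nonneg_of_isPath hc (hP.1.1 j)) _
    _ ≤ famCost c Q := hP.2 Q hQ
    _ ≤ _ := famCost_le_mul_sup'_pathCost c Q _

/-- A minimum-total-cost family `P` of `p` edge-disjoint
paths from `s` to `t` is a factor-`p` approximation for the minimum bottleneck
problem: `max_{π ∈ P} c(π) ≤ p · max_{π ∈ Q} c(π)` for every family `Q` of `p`
edge-disjoint paths from `s` to `t`. -/
theorem min_cost_family_bottleneck_approx [Fintype V]
    (E : Set (V × V)) (c : V × V → ℝ) (s : V)
    (hirr : ∀ e ∈ E, e.1 ≠ e.2)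
    (hanti : ∀ e ∈ E, (e.2, e.1) ∉ E)
    (hc : ∀ e ∈ E, 0 ≤ c e)
    (p : ℕ) (hp : 1 ≤ p)
    (t : V) (ht : t ≠ s)
    (hex : ∃ R : Fin p → List (V × V), IsDisjointFamily E s t R)
    (P Q : Fin p → List (V × V))
    (hP : IsMinFamily E c s t P)
    (hQ : IsDisjointFamily E s t Q) :
    Finset.univ.sup' ⟨⟨0, hp⟩, Finset.mem_univ _⟩ (fun j => pathCost c (P j)) ≤
      (p : ℝ) *
        Finset.univ.sup' ⟨⟨0, hp⟩, Finset.mem_univ _⟩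
          (fun j => pathCost c (Q j)) :=
  min_cost_family_bottleneck_approx_general E c s hc p hp t P Q hP hQ

end MultipathPreserver
end
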